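/- arXiv:2402.14712 — 6 statements merged into one kernel-verified Lean document; each statement's English description precedes it below -/
import Mathlib

section
/- Let N(n₁,n₂,r,s) denote the number of pairs (u,v) ∈ Δ_{n₁,r} × Δ_{n₂,r} with D(u,v) = s, with the convention N(n₁,n₂,r,s) = 0 whenever any of the arguments is negative. Then for all integers n₁, n₂, s ≥ 0 and r ≥ 1: N(n₁,n₂,r,s) = Σ_{i≥0} N(n₁−i, n₂−i, r−1, s) + Σ_{i≥0} Σ_{j≥1} N(n₁−i, n₂−i−j, r−1, s−j) + Σ_{i≥0} Σ_{j≥1} N(n₁−i−j, n₂−i, r−1, s−j), where all sums are finite because all but finitely many terms vanish. -/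
/-!
Removing the first coordinates `a = u 0`, `b = v 0` of a pair `(u, v)` leaves a pair in
`Δ_{n₁-a,r-1} × Δ_{n₂-b,r-1}` at distance `s - |a - b|`, so `N(n₁,n₂,r,s)` is a sum over all
`(a, b) ∈ ℕ²`. Sorting these into `a = b = i`, `b = i + j + 1` and `a = i + j + 1`
(with `|a - b|` equal to `0`, `j + 1` and `j + 1`) gives the three sums.
-/

/-- `simplexPairCount n₁ n₂ r s` is the number of pairs `(u,v) ∈ Δ_{n₁,r} × Δ_{n₂,r}`
(standard simplices) with L1-distance `D(u,v) = s`.  If any of `n₁, n₂, s` is negative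
the set is empty and the count is `0`. -/
noncomputable def simplexPairCount (n₁ n₂ : ℤ) (r : ℕ) (s : ℤ) : ℕ :=
  Nat.card {p : (Fin r → ℤ) × (Fin r → ℤ) //
    (∀ i, 0 ≤ p.1 i) ∧ (∑ i, p.1 i) = n₁ ∧
    (∀ i, 0 ≤ p.2 i) ∧ (∑ i, p.2 i) = n₂ ∧
    (∑ i, |p.1 i - p.2 i|) = s}

theorem Nat.card_eq_tsum_one (β : Type*) [Finite β] : Nat.card β = ∑' _ : β, 1 := by
  have := Fintype.ofFinite β
  simp [tsum_fintype]

theorem Nat.card_sigma_eq_tsum {ι : Type*} {F : ι → Type*} [Finite (Σ i, F i)] :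
    Nat.card (Σ i, F i) = ∑' i, Nat.card (F i) := by
  have (i : ι) : Finite (F i) := .of_injective (Sigma.mk i) sigma_mk_injective
  rw [Nat.card_eq_tsum_one, Summable.tsum_sigma' (fun _ => .of_finite) .of_finite]
  exact tsum_congr fun i => (Nat.card_eq_tsum_one (F i)).symm

theorem Nat.card_sigma_prod_eq_tsum_tsum {α β : Type*} {F : α × β → Type*}
    [Finite (Σ p, F p)] :
    Nat.card (Σ p, F p) = ∑' a, ∑' b, Nat.card (F (a, b)) := by
  let e : (Σ p, F p) ≃ Σ a, Σ b, F (a, b) :=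
    { toFun x := ⟨x.1.1, x.1.2, x.2⟩
      invFun y := ⟨(y.1, y.2.1), y.2.2⟩ }
  have : Finite (Σ a, Σ b, F (a, b)) := .of_equiv _ e
  have (a : α) : Finite (Σ b, F (a, b)) :=
    .of_injective (Sigma.mk (β := fun a => Σ b, F (a, b)) a) sigma_mk_injective
  simp_rw [Nat.card_congr e, Nat.card_sigma_eq_tsum]

noncomputable def Nat.diagAboveBelowEquiv : ℕ ⊕ (ℕ × ℕ) ⊕ (ℕ × ℕ) ≃ ℕ × ℕ :=
  .ofBijective (Sum.elim (fun i => (i, i))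
    (Sum.elim (fun p => (p.1, p.1 + p.2 + 1)) (fun p => (p.1 + p.2 + 1, p.1)))) <| by
    constructor
    · rintro (i | ⟨i, j⟩ | ⟨i, j⟩) (i' | ⟨i', j'⟩ | ⟨i', j'⟩) h <;>
        simp only [Sum.elim_inl, Sum.elim_inr, Prod.mk.injEq, Sum.inl.injEq,
          Sum.inr.injEq] at h ⊢ <;> omega
    · rintro ⟨a, b⟩
      rcases lt_trichotomy a b with h | rfl | h
      · exact ⟨.inr (.inl (a, b - a - 1)), by simp only [Sum.elim_inr, Sum.elim_inl]; congr; omega⟩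
      · exact ⟨.inl a, rfl⟩
      · exact ⟨.inr (.inr (b, a - b - 1)), by simp only [Sum.elim_inr]; congr; omega⟩

theorem Nat.card_sigma_natProd_eq_diag_add_above_add_below {F : ℕ × ℕ → Type*}
    [Finite (Σ p, F p)] :
    Nat.card (Σ p, F p) = ∑' i, Nat.card (F (i, i)) + ∑' i, ∑' j, Nat.card (F (i, i + j + 1))
      + ∑' i, ∑' j, Nat.card (F (i + j + 1, i)) := by
  let e : (Σ p, F p) ≃ (Σ i, F (i, i)) ⊕ (Σ p : ℕ × ℕ, F (p.1, p.1 + p.2 + 1)) ⊕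
      Σ p : ℕ × ℕ, F (p.1 + p.2 + 1, p.1) :=
    (Equiv.sigmaCongrLeft (β := F) Nat.diagAboveBelowEquiv).symm.trans <|
      (Equiv.sumSigmaDistrib _).trans (Equiv.sumCongr (.refl _) (Equiv.sumSigmaDistrib _))
  have := Finite.of_equiv _ e
  have : Finite (Σ i, F (i, i)) :=
    .of_injective (e.symm ∘ .inl) (e.symm.injective.comp Sum.inl_injective)
  have : Finite (Σ p : ℕ × ℕ, F (p.1, p.1 + p.2 + 1)) := .of_injective (e.symm ∘ .inr ∘ .inl)
    (e.symm.injective.comp (Sum.inr_injective.comp Sum.inl_injective))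
  have : Finite (Σ p : ℕ × ℕ, F (p.1 + p.2 + 1, p.1)) := .of_injective (e.symm ∘ .inr ∘ .inr)
    (e.symm.injective.comp (Sum.inr_injective.comp Sum.inr_injective))
  rw [Nat.card_congr e, Nat.card_sum, Nat.card_sum, Nat.card_sigma_eq_tsum, add_assoc,
    Nat.card_sigma_prod_eq_tsum_tsum, Nat.card_sigma_prod_eq_tsum_tsum]

def IsSimplexPair {r : ℕ} (n₁ n₂ s : ℤ) (p : (Fin r → ℤ) × (Fin r → ℤ)) : Prop :=
  (∀ i, 0 ≤ p.1 i) ∧ (∑ i, p.1 i) = n₁ ∧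
    (∀ i, 0 ≤ p.2 i) ∧ (∑ i, p.2 i) = n₂ ∧ (∑ i, |p.1 i - p.2 i|) = s

theorem simplexPairCount_eq_card (n₁ n₂ : ℤ) (r : ℕ) (s : ℤ) :
    simplexPairCount n₁ n₂ r s = Nat.card {p // IsSimplexPair (r := r) n₁ n₂ s p} := rfl

theorem finite_setOf_isSimplexPair (r : ℕ) (n₁ n₂ s : ℤ) :
    {p : (Fin r → ℤ) × (Fin r → ℤ) | IsSimplexPair n₁ n₂ s p}.Finite := by
  refine ((Set.finite_Icc 0 fun _ => n₁).prod (Set.finite_Icc 0 fun _ => n₂)).subset ?_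
  rintro ⟨u, v⟩ ⟨hu, rfl, hv, rfl, -⟩
  exact ⟨⟨hu, fun i => Finset.single_le_sum (fun j _ => hu j) (Finset.mem_univ i)⟩,
    hv, fun i => Finset.single_le_sum (fun j _ => hv j) (Finset.mem_univ i)⟩

instance (r : ℕ) (n₁ n₂ s : ℤ) :
    Finite {p : (Fin r → ℤ) × (Fin r → ℤ) // IsSimplexPair n₁ n₂ s p} :=
  (finite_setOf_isSimplexPair r n₁ n₂ s).to_subtype

def simplexPairConsEquiv (m : ℕ) (n₁ n₂ s : ℤ) :
    {p : (Fin (m + 1) → ℤ) × (Fin (m + 1) → ℤ) // IsSimplexPair n₁ n₂ s p} ≃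
      Σ ab : ℕ × ℕ, {p : (Fin m → ℤ) × (Fin m → ℤ) //
        IsSimplexPair (n₁ - ab.1) (n₂ - ab.2) (s - |(ab.1 : ℤ) - ab.2|) p} where
  toFun p := ⟨((p.1.1 0).toNat, (p.1.2 0).toNat), (Fin.tail p.1.1, Fin.tail p.1.2), by
    obtain ⟨⟨u, v⟩, hu, rfl, hv, rfl, rfl⟩ := p
    simp only [IsSimplexPair, Fin.sum_univ_succ, Fin.tail, Int.toNat_of_nonneg (hu 0),
      Int.toNat_of_nonneg (hv 0)]
    exact ⟨fun i => hu _, by ring, fun i => hv _, by ring, by ring⟩⟩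
  invFun x := ⟨(Fin.cons (x.1.1 : ℤ) x.2.1.1, Fin.cons (x.1.2 : ℤ) x.2.1.2), by
    obtain ⟨⟨a, b⟩, ⟨u, v⟩, hu, hu', hv, hv', hd⟩ := x
    dsimp only at hu hu' hv hv' hd
    simp only [IsSimplexPair, Fin.forall_fin_succ, Fin.sum_univ_succ, Fin.cons_zero, Fin.cons_succ]
    refine ⟨⟨by positivity, hu⟩, by omega, ⟨by positivity, hv⟩, by omega, by omega⟩⟩
  left_inv := by
    rintro ⟨⟨u, v⟩, hu, -, hv, -⟩
    simp [Int.toNat_of_nonneg (hu 0), Int.toNat_of_nonneg (hv 0)]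
  right_inv := by
    rintro ⟨⟨a, b⟩, ⟨u, v⟩, -⟩
    exact Sigma.subtype_ext (by simp) (by simp)

theorem stmt2_general (n₁ n₂ s : ℤ)
    (r : ℕ) (hr : 1 ≤ r) :
    simplexPairCount n₁ n₂ r s
      = (∑' i : ℕ, simplexPairCount (n₁ - (i : ℤ)) (n₂ - (i : ℤ)) (r - 1) s)
      + (∑' i : ℕ, ∑' j : ℕ,
          simplexPairCount (n₁ - (i : ℤ)) (n₂ - (i : ℤ) - ((j : ℤ) + 1)) (r - 1)
            (s - ((j : ℤ) + 1)))
      + (∑' i : ℕ, ∑' j : ℕ,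
          simplexPairCount (n₁ - (i : ℤ) - ((j : ℤ) + 1)) (n₂ - (i : ℤ)) (r - 1)
            (s - ((j : ℤ) + 1))) := by
  obtain ⟨m, rfl⟩ : ∃ m, r = m + 1 := ⟨r - 1, by omega⟩
  have := Finite.of_equiv _ (simplexPairConsEquiv m n₁ n₂ s)
  rw [simplexPairCount_eq_card, Nat.card_congr (simplexPairConsEquiv m n₁ n₂ s),
    Nat.card_sigma_natProd_eq_diag_add_above_add_below]
  have above (i j : ℕ) : |(i : ℤ) - (i + j + 1 : ℕ)| = j + 1 := by
    rw [abs_sub_comm, abs_of_nonneg] <;> omega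
  have below (i j : ℕ) : |((i + j + 1 : ℕ) : ℤ) - i| = j + 1 := by
    rw [abs_of_nonneg] <;> omega
  simp only [above, below]
  simp only [Nat.add_sub_cancel, Nat.cast_add, Nat.cast_one, sub_self, abs_zero, sub_zero,
    ← sub_sub]
  rfl

/-- Recursive characterization of the number of pairs at L1-distance `s` in standard
simplices.  The sums `Σ_{i ≥ 0}` and `Σ_{j ≥ 1}` are written as `tsum`s over `ℕ`
(`j ≥ 1` being encoded by summing over `j + 1`); all but finitely many terms vanish. -/
theorem stmt2 (n₁ n₂ s : ℤ) (hn₁ : 0 ≤ n₁) (hn₂ : 0 ≤ n₂) (hs : 0 ≤ s)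
    (r : ℕ) (hr : 1 ≤ r) :
    simplexPairCount n₁ n₂ r s
      = (∑' i : ℕ, simplexPairCount (n₁ - (i : ℤ)) (n₂ - (i : ℤ)) (r - 1) s)
      + (∑' i : ℕ, ∑' j : ℕ,
          simplexPairCount (n₁ - (i : ℤ)) (n₂ - (i : ℤ) - ((j : ℤ) + 1)) (r - 1)
            (s - ((j : ℤ) + 1)))
      + (∑' i : ℕ, ∑' j : ℕ,
          simplexPairCount (n₁ - (i : ℤ) - ((j : ℤ) + 1)) (n₂ - (i : ℤ)) (r - 1)
            (s - ((j : ℤ) + 1))) :=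
  stmt2_general n₁ n₂ s r hr
end

section
/- Let H(x,y,z) = (1−x²)(1−xz) − y(1+xz) and fix reals ρ > 0 and 0 < δ < 2. Define x* = √(1 − 2ρ/(2+2ρ−δ)), z* = (√(ρ²+δ²) − ρ)/(x*·δ), and y* = 2(√(ρ²+δ²) − δ)/(2 − δ + 2ρ). Then x*, y*, z* > 0, H(x*,y*,z*) = 0, and at the point (x*,y*,z*) the proportionality relations (x·∂H/∂x)/2 = (y·∂H/∂y)/ρ = (z·∂H/∂z)/δ hold. -/
open MvPolynomial

/-- `H(x,y,z) = (1 − x²)(1 − xz) − y(1 + xz)` as a polynomial in three variables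
(variable `0` is `x`, `1` is `y`, `2` is `z`). -/
noncomputable def Hstd : MvPolynomial (Fin 3) ℝ :=
  (1 - X 0 ^ 2) * (1 - X 0 * X 2) - X 1 * (1 + X 0 * X 2)

/-!
With `a = x²` and `p = xz`, both `H` and the weighted derivatives `x H_x`, `y H_y`, `z H_z`
are polynomials in `a`, `p`, `y`. At the explicit point `a = (2-δ)/(2+2ρ-δ)`,
`p = (s-ρ)/δ` and `y = 2(s-δ)/(2+2ρ-δ)`, where `s = √(ρ²+δ²)`, all the required identities
reduce to the single relation `s² = ρ² + δ²`; the common value of the three ratios is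
`-2(ρ+δ-s)/((2+2ρ-δ)δ)`.
-/

lemma eval_Hstd (x y z : ℝ) :
    eval ![x, y, z] Hstd = (1 - x ^ 2) * (1 - x * z) - y * (1 + x * z) := by
  simp [Hstd]

lemma eval_pderiv_zero_Hstd (x y z : ℝ) :
    eval ![x, y, z] (pderiv 0 Hstd) = -2 * x * (1 - x * z) - z * (1 - x ^ 2) - y * z := by
  simp [Hstd, pderiv_X]
  ring

lemma eval_pderiv_one_Hstd (x y z : ℝ) :
    eval ![x, y, z] (pderiv 1 Hstd) = -(1 + x * z) := by
  simp [Hstd, pderiv_X]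

lemma eval_pderiv_two_Hstd (x y z : ℝ) :
    eval ![x, y, z] (pderiv 2 Hstd) = -x * (1 - x ^ 2) - y * x := by
  simp [Hstd, pderiv_X]
  ring

lemma critical_relations_of_sq_eq {ρ δ s a p y : ℝ} (hρ : ρ ≠ 0) (hδ : δ ≠ 0)
    (hD : 2 + 2 * ρ - δ ≠ 0) (hs : s ^ 2 = ρ ^ 2 + δ ^ 2) (ha : a = (2 - δ) / (2 + 2 * ρ - δ))
    (hp : p = (s - ρ) / δ) (hy : y = 2 * (s - δ) / (2 + 2 * ρ - δ)) :
    (1 - a) * (1 - p) - y * (1 + p) = 0 ∧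
    (-2 * a * (1 - p) - p * (1 - a) - y * p) / 2 = -y * (1 + p) / ρ ∧
    -y * (1 + p) / ρ = (-p * (1 - a) - p * y) / δ := by
  -- an atomic denominator, so that `field_simp` still recognises it as `hD` after normalizing
  generalize hD' : 2 + 2 * ρ - δ = D at hD ha hy
  subst ha hp hy
  refine ⟨?_, ?_, ?_⟩
  · field_simp
    subst hD'
    linear_combination (-2 : ℝ) * hs
  · field_simp
    subst hD'
    linear_combination (4 - 2 * ρ) * hs
  · field_simp
    subst hD'
    linear_combination (2 * ρ - 2 * δ) * hs

/-- The explicit point `(x*, y*, z*)` is positive, lies on `H = 0`, and satisfies the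
critical-point proportionality relations `(x H_x)/2 = (y H_y)/ρ = (z H_z)/δ`. -/
theorem stmt4 (ρ δ : ℝ) (hρ : 0 < ρ) (hδ0 : 0 < δ) (hδ2 : δ < 2) :
    let xs : ℝ := Real.sqrt (1 - 2 * ρ / (2 + 2 * ρ - δ))
    let zs : ℝ := (Real.sqrt (ρ ^ 2 + δ ^ 2) - ρ) / (xs * δ)
    let ys : ℝ := 2 * (Real.sqrt (ρ ^ 2 + δ ^ 2) - δ) / (2 - δ + 2 * ρ)
    0 < xs ∧ 0 < ys ∧ 0 < zs ∧
    eval ![xs, ys, zs] Hstd = 0 ∧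
    (xs * eval ![xs, ys, zs] (pderiv 0 Hstd)) / 2
      = (ys * eval ![xs, ys, zs] (pderiv 1 Hstd)) / ρ ∧
    (ys * eval ![xs, ys, zs] (pderiv 1 Hstd)) / ρ
      = (zs * eval ![xs, ys, zs] (pderiv 2 Hstd)) / δ := by
  intro xs zs ys
  set s := Real.sqrt (ρ ^ 2 + δ ^ 2)
  have hs : s ^ 2 = ρ ^ 2 + δ ^ 2 := Real.sq_sqrt (by positivity)
  have hρs : ρ < s := Real.lt_sqrt_of_sq_lt (by nlinarith)
  have hδs : δ < s := Real.lt_sqrt_of_sq_lt (by nlinarith)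
  have hD : 0 < 2 + 2 * ρ - δ := by linarith
  have harg : 0 < 1 - 2 * ρ / (2 + 2 * ρ - δ) := by
    rw [sub_pos, div_lt_one hD]
    linarith
  have hxs : 0 < xs := Real.sqrt_pos.mpr harg
  have hx2 : xs ^ 2 = (2 - δ) / (2 + 2 * ρ - δ) := by
    rw [Real.sq_sqrt harg.le, eq_div_iff hD.ne', sub_mul, div_mul_cancel₀ _ hD.ne']
    ring
  have hxz : xs * zs = (s - ρ) / δ := by
    change xs * ((s - ρ) / (xs * δ)) = _
    field_simp
  have hy : ys = 2 * (s - δ) / (2 + 2 * ρ - δ) := by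
    change 2 * (s - δ) / (2 - δ + 2 * ρ) = _
    ring
  obtain ⟨hH, h01, h12⟩ := critical_relations_of_sq_eq hρ.ne' hδ0.ne' hD.ne' hs hx2 hxz hy
  refine ⟨hxs, hy ▸ div_pos (by linarith) hD,
    div_pos (by linarith) (mul_pos hxs hδ0), ?_, ?_, ?_⟩
  · rw [eval_Hstd, hH]
  · rw [eval_pderiv_zero_Hstd, eval_pderiv_one_Hstd]
    linear_combination h01
  · rw [eval_pderiv_one_Hstd, eval_pderiv_two_Hstd]
    linear_combination h12
end

section
/- Fix reals ρ > 0 and 0 < δ ≤ 2. Let A(Δ_{n,r}, d) be the maximum cardinality of a subset C ⊆ Δ_{n,r} such that D(c₁,c₂) ≥ d for all distinct c₁, c₂ ∈ C. Then limsup_{n→∞} (1/n)·log₂ A(Δ_{n,⌊ρn⌋}, ⌊δn⌋) ≤ (1 + δ/2 + ρ)·H(ρ/(1 + δ/2 + ρ)) − (δ/2 + ρ)·H(ρ/(δ/2 + ρ)). -/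
/-- The binary entropy function (base-2 logarithms). -/
noncomputable def binH (p : ℝ) : ℝ := -p * Real.logb 2 p - (1 - p) * Real.logb 2 (1 - p)

/-- `simplexCodeMax n r d = A(Δ_{n,r}, d)`: the maximum cardinality of a subset `C` of the
standard simplex `Δ_{n,r}` with pairwise L1-distance at least `d`. -/
noncomputable def simplexCodeMax (n r d : ℕ) : ℕ :=
  sSup {m : ℕ | ∃ C : Finset (Fin r → ℤ),
    (∀ u ∈ C, (∀ i, 0 ≤ u i) ∧ (∑ i, u i) = (n : ℤ)) ∧
    (∀ u ∈ C, ∀ v ∈ C, u ≠ v → (d : ℤ) ≤ ∑ i, |u i - v i|) ∧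
    C.card = m}

/-!
Sphere packing: if the codewords of `C ⊆ Δ_{n,r}` are at L1-distance `≥ d > 2t`, the translates
`c + Δ_{t,r}` are pairwise disjoint and contained in `Δ_{n+t,r}`, so with `r = k + 1`
we get `|C| · C(t+k, k) ≤ C(n+t+k, k)`. The binomials are estimated by
`2^{N H(k/N)} / (N+1) ≤ C(N,k) ≤ 2^{N H(k/N)}`, obtained by comparing `C(N,k) k^k (N-k)^(N-k)` with
the sum and with the largest term of the binomial expansion of `N^N = (k + (N-k))^N`.
Taking `r ≈ ρn` and `t ≈ δn/2` gives the rate in the limit.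
-/
open Finset

def simplex (r m : ℕ) : Finset (Fin r → ℤ) :=
  (Nat.antidiagonalTuple r m).map (Function.Embedding.piCongrRight fun _ => Nat.castEmbedding)

theorem mem_simplex {r m : ℕ} {u : Fin r → ℤ} :
    u ∈ simplex r m ↔ (∀ i, 0 ≤ u i) ∧ ∑ i, u i = m := by
  constructor
  · simp only [simplex, mem_map, Nat.mem_antidiagonalTuple]
    rintro ⟨f, rfl, rfl⟩
    simp [Function.Embedding.piCongrRight]
  · rintro ⟨h0, hsum⟩
    refine mem_map.2 ⟨fun i => (u i).toNat, ?_, funext fun i => Int.toNat_of_nonneg (h0 i)⟩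
    rw [Nat.mem_antidiagonalTuple, ← Nat.cast_inj (R := ℤ), ← hsum]
    push_cast
    exact sum_congr rfl fun i _ => Int.toNat_of_nonneg (h0 i)

theorem card_simplex (r m : ℕ) : #(simplex r m) = (r + m - 1).choose m := by
  rw [simplex, card_map, card_eq_of_equiv_fintype ((Equiv.subtypeEquivRight fun _ =>
    Nat.mem_antidiagonalTuple).trans (Sym.equivNatSumOfFintype (Fin r) m).symm),
    Sym.card_sym_eq_choose, Fintype.card_fin]

theorem add_mem_simplex {r m m' : ℕ} {u v : Fin r → ℤ} (hu : u ∈ simplex r m)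
    (hv : v ∈ simplex r m') : u + v ∈ simplex r (m + m') := by
  rw [mem_simplex] at *
  refine ⟨fun i => add_nonneg (hu.1 i) (hv.1 i), ?_⟩
  simp only [Pi.add_apply, sum_add_distrib, hu.2, hv.2, Nat.cast_add]

theorem sum_abs_sub_le_of_add_eq_add {r t : ℕ} {c c' e e' : Fin r → ℤ}
    (he : e ∈ simplex r t) (he' : e' ∈ simplex r t) (h : c + e = c' + e') :
    ∑ i, |c i - c' i| ≤ 2 * t := by
  rw [mem_simplex] at he he'
  calc ∑ i, |c i - c' i| ≤ ∑ i, (e i + e' i) := by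
        refine sum_le_sum fun i _ => ?_
        have hi : c i + e i = c' i + e' i := congrFun h i
        rw [abs_le]
        constructor <;> linarith [he.1 i, he'.1 i]
    _ = 2 * t := by rw [sum_add_distrib, he.2, he'.2]; ring

theorem card_mul_card_simplex_le {n r d t : ℕ} (htd : 2 * t < d) {C : Finset (Fin r → ℤ)}
    (hC : ∀ u ∈ C, u ∈ simplex r n)
    (hd : ∀ u ∈ C, ∀ v ∈ C, u ≠ v → (d : ℤ) ≤ ∑ i, |u i - v i|) :
    #C * #(simplex r t) ≤ #(simplex r (n + t)) := by
  rw [← card_product]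
  refine card_le_card_of_injOn (fun p => p.1 + p.2)
    (fun p hp => add_mem_simplex (hC _ (mem_product.1 hp).1) (mem_product.1 hp).2) ?_
  rintro ⟨c, e⟩ hp ⟨c', e'⟩ hp' h
  simp only [coe_product, Set.mem_prod, mem_coe] at hp hp' h
  obtain rfl : c = c' := by
    by_contra hne
    have := sum_abs_sub_le_of_add_eq_add hp.2 hp'.2 h
    have := hd c hp.1 c' hp'.1 hne
    omega
  simpa using h

theorem bddAbove_card_codes (n r d : ℕ) : BddAbove {m : ℕ | ∃ C : Finset (Fin r → ℤ),
    (∀ u ∈ C, (∀ i, 0 ≤ u i) ∧ (∑ i, u i) = (n : ℤ)) ∧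
    (∀ u ∈ C, ∀ v ∈ C, u ≠ v → (d : ℤ) ≤ ∑ i, |u i - v i|) ∧
    C.card = m} := by
  refine ⟨#(simplex r n), ?_⟩
  rintro m ⟨C, hC, -, rfl⟩
  exact card_le_card fun u hu => mem_simplex.2 (hC u hu)

theorem exists_code_card_eq_simplexCodeMax (n r d : ℕ) : ∃ C : Finset (Fin r → ℤ),
    (∀ u ∈ C, u ∈ simplex r n) ∧
    (∀ u ∈ C, ∀ v ∈ C, u ≠ v → (d : ℤ) ≤ ∑ i, |u i - v i|) ∧
    #C = simplexCodeMax n r d := by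
  obtain ⟨C, hC, hd, hcard⟩ := Nat.sSup_mem
    (by exact ⟨0, ∅, by simp, by simp, rfl⟩) (bddAbove_card_codes n r d)
  exact ⟨C, fun u hu => mem_simplex.2 (hC u hu), hd, hcard⟩

theorem one_le_simplexCodeMax {n r d : ℕ} (hr : 0 < r) : 1 ≤ simplexCodeMax n r d :=
  le_csSup (bddAbove_card_codes n r d)
    ⟨{Pi.single ⟨0, hr⟩ (n : ℤ)}, by simp [Pi.single_apply, apply_ite], by simp, rfl⟩

theorem simplexCodeMax_mul_choose_le {n k d t : ℕ} (htd : 2 * t < d) :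
    simplexCodeMax n (k + 1) d * (t + k).choose k ≤ (n + t + k).choose k := by
  obtain ⟨C, hC, hd, hcard⟩ := exists_code_card_eq_simplexCodeMax n (k + 1) d
  have h := card_mul_card_simplex_le htd hC hd
  have hcount (m : ℕ) : #(simplex (k + 1) m) = (m + k).choose k := by
    rw [card_simplex, show k + 1 + m - 1 = m + k by omega, Nat.choose_symm_add]
  rwa [hcard, hcount, hcount] at h

namespace Nat

/-- The `j`-th term of the binomial expansion of `N ^ N = (k + (N - k)) ^ N`. -/
def binomTerm (N k j : ℕ) : ℕ := N.choose j * k ^ j * (N - k) ^ (N - j)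

variable {N k : ℕ}

theorem sum_binomTerm (hk : k ≤ N) : ∑ j ∈ range (N + 1), binomTerm N k j = N ^ N := by
  conv_rhs => rw [← Nat.add_sub_cancel' hk, add_pow, Nat.add_sub_cancel' hk]
  exact sum_congr rfl fun j _ => by simp only [binomTerm, Nat.cast_id]; ring

theorem binomTerm_mul_eq (j : ℕ) :
    binomTerm N k j * ((N - j) * k) = binomTerm N k (j + 1) * ((j + 1) * (N - k)) := by
  rcases lt_or_ge j N with hj | hj
  · obtain ⟨a, ha⟩ : ∃ a, N - j = a + 1 := ⟨N - (j + 1), by omega⟩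
    have hsucc := Nat.choose_succ_right_eq N j
    rw [ha] at hsucc
    simp only [binomTerm, ha, show N - (j + 1) = a by omega]
    calc N.choose j * k ^ j * (N - k) ^ (a + 1) * ((a + 1) * k)
        = N.choose j * (a + 1) * (k ^ (j + 1) * (N - k) ^ (a + 1)) := by ring
      _ = N.choose (j + 1) * (j + 1) * (k ^ (j + 1) * (N - k) ^ (a + 1)) := by rw [hsucc]
      _ = N.choose (j + 1) * k ^ (j + 1) * (N - k) ^ a * ((j + 1) * (N - k)) := by ring
  · simp [binomTerm, Nat.choose_eq_zero_of_lt (Nat.lt_succ_of_le hj), Nat.sub_eq_zero_of_le hj]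

theorem binomTerm_le_succ {j : ℕ} (hj : j < k) (hk : k ≤ N) :
    binomTerm N k j ≤ binomTerm N k (j + 1) := by
  have hpos : 0 < (N - j) * k := Nat.mul_pos (by omega) (by omega)
  refine Nat.le_of_mul_le_mul_right ?_ hpos
  rw [binomTerm_mul_eq]
  exact Nat.mul_le_mul_left _ ((Nat.mul_le_mul hj (by omega)).trans_eq (mul_comm _ _))

theorem binomTerm_succ_le {j : ℕ} (hj : k ≤ j) : binomTerm N k (j + 1) ≤ binomTerm N k j := by
  rcases lt_or_ge j N with hjN | hjN
  · have hpos : 0 < (j + 1) * (N - k) := Nat.mul_pos (by omega) (by omega)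
    refine Nat.le_of_mul_le_mul_right ?_ hpos
    rw [← binomTerm_mul_eq]
    exact Nat.mul_le_mul_left _ ((mul_comm _ _).trans_le (Nat.mul_le_mul (by omega) (by omega)))
  · simp [binomTerm, Nat.choose_eq_zero_of_lt (Nat.lt_succ_of_le hjN)]

theorem binomTerm_le_binomTerm_self (hk : k ≤ N) (j : ℕ) : binomTerm N k j ≤ binomTerm N k k := by
  rcases le_total j k with hjk | hjk
  · refine monotoneOn_of_le_succ Set.ordConnected_Iic (fun a _ _ ha => ?_) hjk Set.self_mem_Iic hjk
    rw [Order.succ_eq_add_one] at ha ⊢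
    exact binomTerm_le_succ (by simpa using ha) hk
  · exact antitoneOn_nat_Ici_of_succ_le (fun a ha => binomTerm_succ_le ha) Set.self_mem_Ici hjk hjk

theorem choose_mul_pow_mul_pow_pos (hk : k ≤ N) : 0 < N.choose k * k ^ k * (N - k) ^ (N - k) :=
  Nat.mul_pos (Nat.mul_pos (Nat.choose_pos hk) Nat.pow_self_pos) Nat.pow_self_pos

theorem choose_mul_pow_mul_pow_le (hk : k ≤ N) :
    N.choose k * k ^ k * (N - k) ^ (N - k) ≤ N ^ N := by
  rw [← sum_binomTerm hk]
  exact single_le_sum (f := binomTerm N k) (fun _ _ => Nat.zero_le _)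
    (mem_range.2 (Nat.lt_succ_of_le hk))

theorem pow_le_succ_mul_choose_mul_pow_mul_pow (hk : k ≤ N) :
    N ^ N ≤ (N + 1) * (N.choose k * k ^ k * (N - k) ^ (N - k)) := by
  rw [← sum_binomTerm hk]
  exact (sum_le_card_nsmul _ _ _ fun j _ => binomTerm_le_binomTerm_self hk j).trans_eq
    (by simp [binomTerm])

end Nat

open Real

theorem binH_eq_binEntropy_div (p : ℝ) : binH p = binEntropy p / log 2 := by
  simp only [binH, binEntropy, logb, log_inv]
  ring

@[fun_prop]
theorem continuous_binH : Continuous binH := by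
  simpa only [← funext binH_eq_binEntropy_div] using binEntropy_continuous.div_const (log 2)

theorem mul_binH_div {k N : ℝ} (h0 : 0 < k) (h1 : k < N) :
    N * binH (k / N) = N * logb 2 N - k * logb 2 k - (N - k) * logb 2 (N - k) := by
  have hN : 0 < N := h0.trans h1
  rw [binH, one_sub_div hN.ne', logb_div h0.ne' hN.ne', logb_div (by linarith) hN.ne']
  field_simp
  ring

theorem logb_choose_mul_pow_mul_pow {N k : ℕ} (h0 : 0 < k) (h1 : k < N) :
    logb 2 ((N.choose k * k ^ k * (N - k) ^ (N - k) : ℕ) : ℝ) =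
      logb 2 (N.choose k) + logb 2 ((N ^ N : ℕ) : ℝ) - N * binH (k / N) := by
  have hk : (0 : ℝ) < k := by exact_mod_cast h0
  have hNk : (0 : ℝ) < (N - k : ℕ) := by exact_mod_cast Nat.sub_pos_of_lt h1
  have hC : (0 : ℝ) < N.choose k := by exact_mod_cast Nat.choose_pos h1.le
  push_cast
  rw [mul_binH_div hk (by exact_mod_cast h1), logb_mul (by positivity) (by positivity),
    logb_mul hC.ne' (by positivity), logb_pow, logb_pow, logb_pow, ← Nat.cast_sub h1.le]
  push_cast [Nat.cast_sub h1.le]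
  ring

theorem logb_choose_le {N k : ℕ} (h0 : 0 < k) (h1 : k < N) :
    logb 2 (N.choose k) ≤ N * binH (k / N) := by
  have h := logb_le_logb_of_le one_lt_two
    (Nat.cast_pos.2 (Nat.choose_mul_pow_mul_pow_pos h1.le))
    (Nat.cast_le.2 (Nat.choose_mul_pow_mul_pow_le h1.le))
  rw [logb_choose_mul_pow_mul_pow h0 h1] at h
  linarith

theorem le_logb_choose {N k : ℕ} (h0 : 0 < k) (h1 : k < N) :
    N * binH (k / N) - logb 2 (N + 1) ≤ logb 2 (N.choose k) := by
  have hX : (0 : ℝ) < (N.choose k * k ^ k * (N - k) ^ (N - k) : ℕ) :=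
    Nat.cast_pos.2 (Nat.choose_mul_pow_mul_pow_pos h1.le)
  have hN : 0 < N := h0.trans h1
  have h := logb_le_logb_of_le one_lt_two (by positivity)
    (Nat.cast_le.2 (Nat.pow_le_succ_mul_choose_mul_pow_mul_pow h1.le))
  rw [Nat.cast_mul, logb_mul (by positivity) hX.ne', logb_choose_mul_pow_mul_pow h0 h1] at h
  push_cast at h
  linarith

noncomputable def packingRate (τ ρ : ℝ) : ℝ :=
  (1 + τ + ρ) * binH (ρ / (1 + τ + ρ)) - (τ + ρ) * binH (ρ / (τ + ρ))

theorem continuousAt_packingRate {τ ρ : ℝ} (h₁ : 1 + τ + ρ ≠ 0) (h₂ : τ + ρ ≠ 0) :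
    ContinuousAt (fun x : ℝ × ℝ => packingRate x.1 x.2) (τ, ρ) := by
  unfold packingRate
  fun_prop (disch := assumption)

theorem logb_simplexCodeMax_div_le {n k d t : ℕ} (hn : 0 < n) (hk : 0 < k) (ht : 0 < t)
    (htd : 2 * t < d) :
    logb 2 (simplexCodeMax n (k + 1) d) / n ≤
      packingRate (t / n) (k / n) + logb 2 (t + k + 1) / n := by
  have hA : (0 : ℝ) < simplexCodeMax n (k + 1) d :=
    Nat.cast_pos.2 (one_le_simplexCodeMax k.succ_pos)
  have hC : (0 : ℝ) < (t + k).choose k := by exact_mod_cast Nat.choose_pos (by omega)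
  have hcode : logb 2 (simplexCodeMax n (k + 1) d) + logb 2 ((t + k).choose k) ≤
      logb 2 ((n + t + k).choose k) := by
    rw [← logb_mul hA.ne' hC.ne']
    exact logb_le_logb_of_le one_lt_two (mul_pos hA hC)
      (by exact_mod_cast simplexCodeMax_mul_choose_le htd)
  have hN := logb_choose_le (N := n + t + k) hk (by omega)
  have hM := le_logb_choose (N := t + k) hk (by omega)
  have hn' : (n : ℝ) ≠ 0 := by positivity
  have hrate : packingRate (t / n) (k / n) =
      ((n + t + k) * binH (k / (n + t + k)) - (t + k) * binH (k / (t + k))) / n := by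
    rw [packingRate, show 1 + (t : ℝ) / n + k / n = (n + t + k) / n by field_simp,
      show (t : ℝ) / n + k / n = (t + k) / n by field_simp, div_div_div_cancel_right₀ hn',
      div_div_div_cancel_right₀ hn']
    ring
  rw [hrate, ← add_div]
  gcongr
  push_cast at hN hM
  linarith

open Filter Topology

theorem tendsto_div_natCast_of_abs_sub_le {x y : ℕ → ℝ} {c B : ℝ}
    (hx : Tendsto (fun n => x n / n) atTop (𝓝 c)) (hxy : ∀ n, |y n - x n| ≤ B) :
    Tendsto (fun n => y n / n) atTop (𝓝 c) := by
  have hB : Tendsto (fun n : ℕ => B / n) atTop (𝓝 0) := tendsto_const_div_atTop_nhds_zero_nat B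
  have herr : Tendsto (fun n : ℕ => (y n - x n) / n) atTop (𝓝 0) :=
    squeeze_zero_norm (fun n => by
      rw [norm_div, Real.norm_natCast, Real.norm_eq_abs]
      exact div_le_div_of_nonneg_right (hxy n) n.cast_nonneg) hB
  simpa [sub_div] using hx.add herr

theorem tendsto_logb_div_natCast {x : ℕ → ℝ} {c : ℝ} (hc : 0 < c)
    (hx : Tendsto (fun n => x n / n) atTop (𝓝 c)) :
    Tendsto (fun n => logb 2 (x n) / n) atTop (𝓝 0) := by
  have hx_top : Tendsto x atTop atTop := by
    refine (hx.pos_mul_atTop hc tendsto_natCast_atTop_atTop).congr' ?_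
    filter_upwards [eventually_ne_atTop 0] with n hn
    field_simp
  have hlog : Tendsto (fun n => log (x n) / x n * (x n / n) / log 2) atTop (𝓝 (0 * c / log 2)) :=
    ((isLittleO_log_id_atTop.tendsto_div_nhds_zero.comp hx_top).mul hx).div_const _
  rw [zero_mul, zero_div] at hlog
  refine hlog.congr' ?_
  filter_upwards [hx_top.eventually_ne_atTop 0] with n hxn
  rw [logb]
  field_simp

theorem limsup_le_of_eventually_le_of_tendsto {ι : Type*} {l : Filter ι} [l.NeBot]
    {f g : ι → ℝ} {b L : ℝ} (hf : ∀ i, b ≤ f i) (hfg : ∀ᶠ i in l, f i ≤ g i)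
    (hg : Tendsto g l (𝓝 L)) : limsup f l ≤ L :=
  (limsup_le_limsup hfg (isCoboundedUnder_le_of_le l hf) hg.isBoundedUnder_le).trans_eq
    hg.limsup_eq

theorem tendsto_natFloor_mul_sub_one_div {a : ℝ} (ha : 0 ≤ a) :
    Tendsto (fun n : ℕ => ((⌊a * n⌋₊ - 1 : ℕ) : ℝ) / n) atTop (𝓝 a) := by
  refine tendsto_div_natCast_of_abs_sub_le (B := 1)
    ((tendsto_nat_floor_mul_div_atTop ha).comp tendsto_natCast_atTop_atTop) fun n => ?_
  have : ((⌊a * n⌋₊ - 1 : ℕ) : ℝ) ≤ ⌊a * n⌋₊ ∧ (⌊a * n⌋₊ : ℝ) ≤ (⌊a * n⌋₊ - 1 : ℕ) + 1 := by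
    exact_mod_cast (by omega : ⌊a * n⌋₊ - 1 ≤ ⌊a * n⌋₊ ∧ ⌊a * n⌋₊ ≤ ⌊a * n⌋₊ - 1 + 1)
  rw [abs_le]
  constructor <;> linarith

theorem tendsto_natFloor_mul_sub_one_div_two_div {a : ℝ} (ha : 0 ≤ a) :
    Tendsto (fun n : ℕ => (((⌊a * n⌋₊ - 1) / 2 : ℕ) : ℝ) / n) atTop (𝓝 (a / 2)) := by
  have h := tendsto_div_natCast_of_abs_sub_le (y := fun n => 2 * (((⌊a * n⌋₊ - 1) / 2 : ℕ) : ℝ))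
    (B := 2) ((tendsto_nat_floor_mul_div_atTop ha).comp tendsto_natCast_atTop_atTop) fun n => by
      have : 2 * (((⌊a * n⌋₊ - 1) / 2 : ℕ) : ℝ) ≤ ⌊a * n⌋₊ ∧
          (⌊a * n⌋₊ : ℝ) ≤ 2 * (((⌊a * n⌋₊ - 1) / 2 : ℕ) : ℝ) + 2 := by
        exact_mod_cast (by omega : 2 * ((⌊a * n⌋₊ - 1) / 2) ≤ ⌊a * n⌋₊ ∧
          ⌊a * n⌋₊ ≤ 2 * ((⌊a * n⌋₊ - 1) / 2) + 2)
      rw [abs_le]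
      constructor <;> linarith
  simpa [mul_div_assoc] using h.div_const 2

theorem stmt8_general (ρ δ : ℝ) (hρ : 0 < ρ) (hδ0 : 0 < δ) :
    Filter.limsup
      (fun n : ℕ =>
        Real.logb 2 (simplexCodeMax n ⌊ρ * (n : ℝ)⌋₊ ⌊δ * (n : ℝ)⌋₊) / n)
      Filter.atTop
    ≤ (1 + δ / 2 + ρ) * binH (ρ / (1 + δ / 2 + ρ))
      - (δ / 2 + ρ) * binH (ρ / (δ / 2 + ρ)) := by
  -- `⌊ρ n⌋ = k n + 1` coordinates; `t n` is the largest radius with `2 t n < ⌊δ n⌋`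
  obtain ⟨k, hk_def⟩ : ∃ k : ℕ → ℕ, ∀ n, k n = ⌊ρ * n⌋₊ - 1 := ⟨_, fun _ => rfl⟩
  obtain ⟨t, ht_def⟩ : ∃ t : ℕ → ℕ, ∀ n, t n = (⌊δ * n⌋₊ - 1) / 2 := ⟨_, fun _ => rfl⟩
  have hk : Tendsto (fun n => (k n : ℝ) / n) atTop (𝓝 ρ) := by
    simpa only [hk_def] using tendsto_natFloor_mul_sub_one_div hρ.le
  have ht : Tendsto (fun n => (t n : ℝ) / n) atTop (𝓝 (δ / 2)) := by
    simpa only [ht_def] using tendsto_natFloor_mul_sub_one_div_two_div hδ0.le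
  have hbound : ∀ᶠ n in atTop, logb 2 (simplexCodeMax n ⌊ρ * n⌋₊ ⌊δ * n⌋₊) / n ≤
      packingRate (t n / n) (k n / n) + logb 2 (t n + k n + 1) / n := by
    filter_upwards [(tendsto_nat_floor_mul_atTop ρ hρ).eventually_ge_atTop 2,
      (tendsto_nat_floor_mul_atTop δ hδ0).eventually_ge_atTop 3, eventually_gt_atTop 0]
      with n hr hd hn
    have := hk_def n
    have := ht_def n
    rw [show ⌊ρ * n⌋₊ = k n + 1 by omega]
    exact logb_simplexCodeMax_div_le hn (by omega) (by omega) (by omega)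
  have hlog : Tendsto (fun n => logb 2 (t n + k n + 1) / n) atTop (𝓝 0) :=
    tendsto_logb_div_natCast (c := δ / 2 + ρ) (by positivity)
      (by simpa [add_div] using (ht.add hk).add tendsto_one_div_atTop_nhds_zero_nat)
  have hrate := (continuousAt_packingRate (τ := δ / 2) (ρ := ρ) (by positivity)
    (by positivity)).tendsto.comp (ht.prodMk_nhds hk)
  refine limsup_le_of_eventually_le_of_tendsto (b := 0) (L := packingRate (δ / 2) ρ)
    (fun n => ?_) hbound (by simpa using hrate.add hlog)
  exact div_nonneg (div_nonneg (log_natCast_nonneg _) (log_nonneg one_le_two)) n.cast_nonneg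

/-- The sphere-packing upper bound for codes in the standard simplex under the
L1 metric: for `ρ > 0` and `0 < δ ≤ 2`. -/
theorem stmt8 (ρ δ : ℝ) (hρ : 0 < ρ) (hδ0 : 0 < δ) (hδ : δ ≤ 2) :
    Filter.limsup
      (fun n : ℕ =>
        Real.logb 2 (simplexCodeMax n ⌊ρ * (n : ℝ)⌋₊ ⌊δ * (n : ℝ)⌋₊) / n)
      Filter.atTop
    ≤ (1 + δ / 2 + ρ) * binH (ρ / (1 + δ / 2 + ρ))
      - (δ / 2 + ρ) * binH (ρ / (δ / 2 + ρ)) :=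
  stmt8_general ρ δ hρ hδ0
end

section
/- Let N∇(n₁,n₂,r,s) denote the number of pairs (u,v) ∈ ∇_{n₁,r} × ∇_{n₂,r} with D(u,v) = s, with the convention N∇(n₁,n₂,r,s) = 0 whenever any of the arguments is negative. Then for all integers n₁, n₂, s ≥ 0 and r ≥ 1: N∇(n₁,n₂,r,s) = Σ_{i≥1} N∇(n₁−i, n₂−i, r−1, s−|n₂−n₁|) + Σ_{i≥1} Σ_{j≥1} N∇(n₁−i, n₂−i−j, r−1, s−|n₁−n₂+j|) + Σ_{i≥1} Σ_{j≥1} N∇(n₁−i−j, n₂−i, r−1, s−|n₁−n₂−j|), where all sums are finite because all but finitely many terms vanish. -/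
/-- `nablaPairCount n₁ n₂ r s` is the number of pairs `(u,v) ∈ ∇_{n₁,r} × ∇_{n₂,r}`
(inverted simplices, i.e. strictly increasing vectors with entries in `[1,n]`) with
L1-distance `D(u,v) = s`, with the convention that the count is `0` whenever any of
`n₁, n₂, s` is negative. -/
noncomputable def nablaPairCount (n₁ n₂ : ℤ) (r : ℕ) (s : ℤ) : ℕ :=
  if 0 ≤ n₁ ∧ 0 ≤ n₂ ∧ 0 ≤ s then
    Nat.card {p : (Fin r → ℤ) × (Fin r → ℤ) //
      (∀ i, 1 ≤ p.1 i) ∧ StrictMono p.1 ∧ (∀ i, p.1 i ≤ n₁) ∧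
      (∀ i, 1 ≤ p.2 i) ∧ StrictMono p.2 ∧ (∀ i, p.2 i ≤ n₂) ∧
      (∑ i, |p.1 i - p.2 i|) = s}
  else 0

/-!
Conditioning on the last coordinates `a = u_r`, `b = v_r`, the remaining pair lies in
`∇_{a-1,r-1} × ∇_{b-1,r-1}` at distance `s - |a - b|`, so
`N∇(n₁,n₂,r,s) = Σ_{1 ≤ a ≤ n₁, 1 ≤ b ≤ n₂} N∇(a-1, b-1, r-1, s-|a-b|)`.
Writing `a = n₁ - i`, `b = n₂ - k` and splitting the pairs `(i, k)` according to `i = k`,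
`i < k`, `i > k` gives the three sums.
-/

open Function Finset

theorem Fin.strictMono_snoc_iff {α : Type*} [Preorder α] {m : ℕ} {u : Fin m → α} {a : α} :
    StrictMono (Fin.snoc u a : Fin (m + 1) → α) ↔ StrictMono u ∧ ∀ i, u i < a := by
  refine ⟨fun h => ⟨fun i j hij => ?_, fun i => ?_⟩, fun ⟨hu, ha⟩ i j hij => ?_⟩
  · simpa using h (Fin.castSucc_lt_castSucc_iff.2 hij)
  · simpa using h (Fin.castSucc_lt_last i)
  · obtain ⟨i, rfl⟩ := Fin.exists_castSucc_eq.2 (Fin.ne_last_of_lt hij)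
    rcases Fin.eq_castSucc_or_eq_last j with ⟨j, rfl⟩ | rfl
    · simpa using hu (Fin.castSucc_lt_castSucc_iff.1 hij)
    · simpa using ha i

def diagSumOffDiagEquiv : ℕ ⊕ (ℕ × ℕ ⊕ ℕ × ℕ) ≃ ℕ × ℕ where
  toFun := Sum.elim (fun i => (i, i))
    (Sum.elim (fun q => (q.1, q.1 + q.2 + 1)) (fun q => (q.1 + q.2 + 1, q.1)))
  invFun p := if p.1 = p.2 then .inl p.1
    else if p.1 < p.2 then .inr (.inl (p.1, p.2 - p.1 - 1)) else .inr (.inr (p.2, p.1 - p.2 - 1))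
  left_inv := by
    rintro (i | ⟨i, j⟩ | ⟨i, j⟩) <;> dsimp only [Sum.elim_inl, Sum.elim_inr] <;> split_ifs <;>
      first | rfl | omega | simp; omega
  right_inv := by
    rintro ⟨i, k⟩
    rcases lt_trichotomy i k with h | rfl | h
    · simp [h, h.ne]; omega
    · simp
    · simp [h.ne', h.not_gt]; omega

theorem tsum_nat_prod_split_diag {M : Type*} [AddCommMonoid M] [TopologicalSpace M]
    [ContinuousAdd M] [T3Space M] (g : ℕ × ℕ → M) (hg : g.HasFiniteSupport) :
    ∑' p, g p = ∑' i, g (i, i) + ∑' i, ∑' j, g (i, i + j + 1) + ∑' i, ∑' j, g (i + j + 1, i) := by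
  have summable {α : Type} {φ : α → ℕ × ℕ} (hφ : Injective φ) : Summable fun x => g (φ x) :=
    summable_of_hasFiniteSupport (hg.comp_of_injective hφ)
  have tsum_prod {φ : ℕ × ℕ → ℕ × ℕ} (hφ : Injective φ) (hφ' : ∀ i, Injective fun j => φ (i, j)) :
      ∑' q, g (φ q) = ∑' i, ∑' j, g (φ (i, j)) :=
    (summable hφ).tsum_prod' fun i => summable (hφ' i)
  have hinl := diagSumOffDiagEquiv.injective.comp Sum.inl_injective
  have hinr := diagSumOffDiagEquiv.injective.comp Sum.inr_injective
  rw [← diagSumOffDiagEquiv.tsum_eq,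
    Summable.tsum_sum (f := fun x => g (diagSumOffDiagEquiv x)) (summable hinl) (summable hinr),
    Summable.tsum_sum (f := fun x => g (diagSumOffDiagEquiv (.inr x)))
      (summable (hinr.comp Sum.inl_injective)) (summable (hinr.comp Sum.inr_injective)),
    add_assoc]
  congr 2
  · exact tsum_prod (hinr.comp Sum.inl_injective) fun i j j' h => by
      simpa [diagSumOffDiagEquiv] using h
  · exact tsum_prod (hinr.comp Sum.inr_injective) fun i j j' h => by
      simpa [diagSumOffDiagEquiv] using h

theorem sum_Icc_prod_Icc_eq_tsum_sub {M : Type*} [AddCommMonoid M] [TopologicalSpace M]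
    {f : ℤ × ℤ → M} (hf : support f ⊆ Set.Ici 1 ×ˢ Set.Ici 1) (n₁ n₂ : ℤ) :
    ∑ ab ∈ Icc 1 n₁ ×ˢ Icc 1 n₂, f ab = ∑' p : ℕ × ℕ, f (n₁ - p.1, n₂ - p.2) := by
  set S := Icc 1 n₁ ×ˢ Icc 1 n₂
  set g : ℕ × ℕ → ℤ × ℤ := fun p => (n₁ - p.1, n₂ - p.2)
  have hg : Injective g := fun p q h => by
    simp only [g, Prod.mk.injEq] at h
    ext <;> omega
  have hS : (S : Set (ℤ × ℤ)) ⊆ Set.range g := fun ab hab => by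
    simp only [S, coe_product, coe_Icc, Set.mem_prod, Set.mem_Icc] at hab
    exact ⟨((n₁ - ab.1).toNat, (n₂ - ab.2).toNat), by ext <;> simp only [g] <;> omega⟩
  have hfg (p : ℕ × ℕ) : (S : Set (ℤ × ℤ)).indicator f (g p) = f (g p) := by
    by_cases hp : g p ∈ (S : Set (ℤ × ℤ))
    · exact Set.indicator_of_mem hp f
    · rw [Set.indicator_of_notMem hp, eq_comm, ← notMem_support]
      intro hsupp
      have := hf hsupp
      simp only [Set.mem_prod, Set.mem_Ici, g] at this
      simp only [S, g, coe_product, coe_Icc, Set.mem_prod, Set.mem_Icc] at hp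
      omega
  calc ∑ ab ∈ S, f ab = ∑' ab, (S : Set (ℤ × ℤ)).indicator f ab := by
        rw [← Finset.tsum_subtype', _root_.tsum_subtype]
    _ = ∑' p, f (g p) := by
        rw [← hg.tsum_eq (Set.support_indicator_subset.trans hS)]
        exact tsum_congr hfg

theorem sum_Icc_prod_Icc_eq_tsum_split {M : Type*} [AddCommMonoid M] [TopologicalSpace M]
    [ContinuousAdd M] [T3Space M] {f : ℤ × ℤ → M} (hf : support f ⊆ Set.Ici 1 ×ˢ Set.Ici 1)
    (n₁ n₂ : ℤ) :
    ∑ ab ∈ Icc 1 n₁ ×ˢ Icc 1 n₂, f ab =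
      ∑' i : ℕ, f (n₁ - i, n₂ - i) + ∑' (i : ℕ) (j : ℕ), f (n₁ - i, n₂ - i - (j + 1)) +
        ∑' (i : ℕ) (j : ℕ), f (n₁ - i - (j + 1), n₂ - i) := by
  have hfin : HasFiniteSupport fun p : ℕ × ℕ => f (n₁ - p.1, n₂ - p.2) :=
    (range n₁.toNat ×ˢ range n₂.toNat).finite_toSet.subset fun p hp => by
      have := hf hp
      simp only [Set.mem_prod, Set.mem_Ici] at this
      simp only [coe_product, coe_range, Set.mem_prod, Set.mem_Iio]
      omega
  rw [sum_Icc_prod_Icc_eq_tsum_sub hf, tsum_nat_prod_split_diag _ hfin]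
  push_cast
  ring_nf

def nabla (n : ℤ) (r : ℕ) : Set (Fin r → ℤ) := {u | (∀ i, 1 ≤ u i) ∧ StrictMono u ∧ ∀ i, u i ≤ n}

def nablaPairs (n₁ n₂ : ℤ) (r : ℕ) (s : ℤ) : Set ((Fin r → ℤ) × (Fin r → ℤ)) :=
  {p | p.1 ∈ nabla n₁ r ∧ p.2 ∈ nabla n₂ r ∧ ∑ i, |p.1 i - p.2 i| = s}

instance (n : ℤ) (r : ℕ) : Finite (nabla n r) :=
  Set.Finite.to_subtype <| (Set.Finite.pi' fun _ => Set.finite_Icc 1 n).subset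
    fun _ hu i => ⟨hu.1 i, hu.2.2 i⟩

instance (n₁ n₂ : ℤ) (r : ℕ) (s : ℤ) : Finite (nablaPairs n₁ n₂ r s) :=
  Set.Finite.to_subtype <| ((Set.toFinite (nabla n₁ r)).prod (Set.toFinite (nabla n₂ r))).subset
    fun _ hp => ⟨hp.1, hp.2.1⟩

theorem nablaPairCount_eq_card {n₁ n₂ : ℤ} (h₁ : 0 ≤ n₁) (h₂ : 0 ≤ n₂) (r : ℕ) (s : ℤ) :
    nablaPairCount n₁ n₂ r s = Nat.card (nablaPairs n₁ n₂ r s) := by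
  rw [nablaPairCount]
  split_ifs with h
  · exact Nat.card_congr <| Equiv.subtypeEquivRight fun p => by
      simp only [nablaPairs, nabla, Set.mem_ofPred_eq, and_assoc]
  · have : nablaPairs n₁ n₂ r s = ∅ := Set.eq_empty_of_forall_notMem fun p hp => by
      have := hp.2.2 ▸ Finset.sum_nonneg fun i _ => abs_nonneg (p.1 i - p.2 i)
      omega
    simp [this]

theorem snoc_mem_nabla {n a : ℤ} {m : ℕ} {u : Fin m → ℤ} :
    (Fin.snoc u a : Fin (m + 1) → ℤ) ∈ nabla n (m + 1) ↔ u ∈ nabla (a - 1) m ∧ a ∈ Set.Icc 1 n := by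
  simp only [nabla, Set.mem_ofPred_eq, Set.mem_Icc, Fin.forall_fin_succ', Fin.snoc_castSucc,
    Fin.snoc_last, Fin.strictMono_snoc_iff, Int.le_sub_one_iff]
  exact ⟨fun ⟨⟨h1, ha⟩, hu, _, hn⟩ => ⟨⟨h1, hu⟩, ha, hn⟩,
    fun ⟨⟨h1, hu⟩, ha, hn⟩ => ⟨⟨h1, ha⟩, hu, fun i => (hu.2 i).le.trans hn, hn⟩⟩

theorem snoc_mem_nablaPairs {n₁ n₂ s a b : ℤ} {m : ℕ} {u v : Fin m → ℤ} :
    ((Fin.snoc u a : Fin (m + 1) → ℤ), (Fin.snoc v b : Fin (m + 1) → ℤ)) ∈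
        nablaPairs n₁ n₂ (m + 1) s ↔
      (u, v) ∈ nablaPairs (a - 1) (b - 1) m (s - |a - b|) ∧ (a, b) ∈ Icc 1 n₁ ×ˢ Icc 1 n₂ := by
  simp only [nablaPairs, Set.mem_ofPred_eq, snoc_mem_nabla, Fin.sum_univ_castSucc,
    Fin.snoc_castSucc, Fin.snoc_last, eq_sub_iff_add_eq, mem_product, Finset.mem_Icc,
    Set.mem_Icc]
  tauto

def nablaPairsSuccEquiv (n₁ n₂ : ℤ) (m : ℕ) (s : ℤ) :
    nablaPairs n₁ n₂ (m + 1) s ≃ Σ ab : ↥(Icc 1 n₁ ×ˢ Icc 1 n₂),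
      nablaPairs (ab.1.1 - 1) (ab.1.2 - 1) m (s - |ab.1.1 - ab.1.2|) where
  toFun p :=
    have hp : ((Fin.snoc (Fin.init p.1.1) (p.1.1 (Fin.last m)) : Fin (m + 1) → ℤ),
        Fin.snoc (Fin.init p.1.2) (p.1.2 (Fin.last m))) ∈ nablaPairs n₁ n₂ (m + 1) s := by
      simpa only [Fin.snoc_init_self] using p.2
    ⟨⟨_, (snoc_mem_nablaPairs.1 hp).2⟩, ⟨_, (snoc_mem_nablaPairs.1 hp).1⟩⟩
  invFun q := ⟨_, snoc_mem_nablaPairs.2 ⟨q.2.2, q.1.2⟩⟩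
  left_inv p := by simp
  right_inv q := Sigma.subtype_ext (by simp) (by simp)

theorem nablaPairCount_succ (n₁ n₂ : ℤ) (m : ℕ) (s : ℤ) :
    nablaPairCount n₁ n₂ (m + 1) s =
      ∑ ab ∈ Icc 1 n₁ ×ˢ Icc 1 n₂, nablaPairCount (ab.1 - 1) (ab.2 - 1) m (s - |ab.1 - ab.2|) := by
  by_cases h : 0 ≤ n₁ ∧ 0 ≤ n₂
  · rw [nablaPairCount_eq_card h.1 h.2, Nat.card_congr (nablaPairsSuccEquiv n₁ n₂ m s),
      Nat.card_sigma, Finset.sum_coe_sort (Icc 1 n₁ ×ˢ Icc 1 n₂)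
        fun ab => Nat.card (nablaPairs (ab.1 - 1) (ab.2 - 1) m (s - |ab.1 - ab.2|))]
    refine Finset.sum_congr rfl fun ab hab => (nablaPairCount_eq_card ?_ ?_ m _).symm <;>
      simp only [mem_product, Finset.mem_Icc] at hab <;> omega
  · rw [nablaPairCount, if_neg (by tauto)]
    rcases not_and_or.1 h with h | h
    · simp [Finset.Icc_eq_empty_of_lt (show n₁ < 1 by omega)]
    · simp [Finset.Icc_eq_empty_of_lt (show n₂ < 1 by omega)]

theorem stmt14_general (n₁ n₂ s : ℤ) (r : ℕ) (hr : 1 ≤ r) :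
    nablaPairCount n₁ n₂ r s
      = (∑' i : ℕ,
          nablaPairCount (n₁ - ((i : ℤ) + 1)) (n₂ - ((i : ℤ) + 1)) (r - 1)
            (s - |n₂ - n₁|))
      + (∑' i : ℕ, ∑' j : ℕ,
          nablaPairCount (n₁ - ((i : ℤ) + 1)) (n₂ - ((i : ℤ) + 1) - ((j : ℤ) + 1)) (r - 1)
            (s - |n₁ - n₂ + ((j : ℤ) + 1)|))
      + (∑' i : ℕ, ∑' j : ℕ,
          nablaPairCount (n₁ - ((i : ℤ) + 1) - ((j : ℤ) + 1)) (n₂ - ((i : ℤ) + 1)) (r - 1)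
            (s - |n₁ - n₂ - ((j : ℤ) + 1)|)) := by
  obtain ⟨m, rfl⟩ := Nat.exists_eq_add_of_le' hr
  have hsupp : support (fun ab : ℤ × ℤ =>
      nablaPairCount (ab.1 - 1) (ab.2 - 1) m (s - |ab.1 - ab.2|)) ⊆ Set.Ici 1 ×ˢ Set.Ici 1 :=
    fun ab hab => by
      simp only [Set.mem_prod, Set.mem_Ici]
      by_contra h
      exact hab (if_neg (by omega))
  rw [Nat.add_sub_cancel, nablaPairCount_succ, sum_Icc_prod_Icc_eq_tsum_split hsupp,
    abs_sub_comm n₂ n₁]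
  refine congr_arg₂ (· + ·) (congr_arg₂ (· + ·) (tsum_congr fun i => ?_)
    (tsum_congr fun i => tsum_congr fun j => ?_)) (tsum_congr fun i => tsum_congr fun j => ?_) <;>
    congr 1 <;> ring_nf

/-- Recursive characterization of the number of pairs at L1-distance `s` in inverted
simplices.  The sums `Σ_{i ≥ 1}` and `Σ_{j ≥ 1}` are written as `tsum`s over `ℕ`
(summing over `i + 1`, `j + 1`); all but finitely many terms vanish. -/
theorem stmt14 (n₁ n₂ s : ℤ) (hn₁ : 0 ≤ n₁) (hn₂ : 0 ≤ n₂) (hs : 0 ≤ s)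
    (r : ℕ) (hr : 1 ≤ r) :
    nablaPairCount n₁ n₂ r s
      = (∑' i : ℕ,
          nablaPairCount (n₁ - ((i : ℤ) + 1)) (n₂ - ((i : ℤ) + 1)) (r - 1)
            (s - |n₂ - n₁|))
      + (∑' i : ℕ, ∑' j : ℕ,
          nablaPairCount (n₁ - ((i : ℤ) + 1)) (n₂ - ((i : ℤ) + 1) - ((j : ℤ) + 1)) (r - 1)
            (s - |n₁ - n₂ + ((j : ℤ) + 1)|))
      + (∑' i : ℕ, ∑' j : ℕ,
          nablaPairCount (n₁ - ((i : ℤ) + 1) - ((j : ℤ) + 1)) (n₂ - ((i : ℤ) + 1)) (r - 1)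
            (s - |n₁ - n₂ - ((j : ℤ) + 1)|)) :=
  stmt14_general n₁ n₂ s r hr
end

section
/- Fix an integer q ≥ 2 and a real 0 < δ ≤ (q²−1)/(3q). Suppose 0 < y* ≤ 1 satisfies 2·Σ_{j=1}^{q−1} (q−j)·(j−δ)·(y*)^j = q·δ, and set x* = 1/(q + 2·Σ_{j=1}^{q−1} (q−j)·(y*)^j). Let A(ℤ_q^n, d) be the maximum cardinality of a subset C ⊆ ℤ_q^n such that D(c₁,c₂) ≥ d for all distinct c₁, c₂ ∈ C. Then limsup_{n→∞} (1/n)·log₂ A(ℤ_q^n, ⌊δn⌋) ≥ 2·log₂ q + log₂ x* + δ·log₂ y*. -/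
set_option maxHeartbeats 1000000


/-- `hypercubeCodeMax q n d = A(ℤ_q^n, d)`: the maximum cardinality of a subset `C` of
the discrete hypercube `ℤ_q^n` with pairwise L1-distance at least `d`. -/
noncomputable def hypercubeCodeMax (q n d : ℕ) : ℕ :=
  sSup {m : ℕ | ∃ C : Finset (Fin n → ℤ),
    (∀ u ∈ C, ∀ i, 0 ≤ u i ∧ u i ≤ (q : ℤ) - 1) ∧
    (∀ u ∈ C, ∀ v ∈ C, u ≠ v → (d : ℤ) ≤ ∑ i, |u i - v i|) ∧
    C.card = m}

section auxGV

theorem caroWei {α : Type*} [DecidableEq α] (r : α → α → Prop) [DecidableRel r]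
    (hrefl : ∀ a, r a a) (hsymm : ∀ a b, r a b → r b a) (Ω : Finset α) :
    ∃ C : Finset α, C ⊆ Ω ∧ (∀ u ∈ C, ∀ v ∈ C, u ≠ v → ¬ r u v) ∧
      ∑ u ∈ Ω, (1 : ℝ) / ((Ω.filter (r u)).card) ≤ C.card := by
  induction Ω using Finset.strongInduction with
  | _ Ω ih =>
    rcases Ω.eq_empty_or_nonempty with rfl | hne
    · exact ⟨∅, by simp⟩
    · obtain ⟨u, hu, hmin⟩ := Ω.exists_min_image (fun u => ((Ω.filter (r u)).card : ℝ)) hne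
      set N := Ω.filter (r u) with hN
      have hNsub : N ⊆ Ω := Finset.filter_subset _ _
      have huN : u ∈ N := Finset.mem_filter.2 ⟨hu, hrefl u⟩
      have hssub : Ω \ N ⊂ Ω := by
        apply Finset.sdiff_ssubset hNsub ⟨u, huN⟩
      obtain ⟨C', hC'sub, hC'ind, hC'card⟩ := ih (Ω \ N) hssub
      refine ⟨insert u C', ?_, ?_, ?_⟩
      · intro x hx
        rcases Finset.mem_insert.1 hx with rfl | hx
        · exact hu
        · exact (Finset.sdiff_subset) (hC'sub hx)
      · have key : ∀ v ∈ C', ¬ r u v := by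
          intro v hv hr
          have hvm : v ∈ Ω \ N := hC'sub hv
          exact (Finset.mem_sdiff.1 hvm).2 (Finset.mem_filter.2 ⟨(Finset.mem_sdiff.1 hvm).1, hr⟩)
        intro a ha b hb hab hr
        rcases Finset.mem_insert.1 ha with ha' | ha' <;> rcases Finset.mem_insert.1 hb with hb' | hb'
        · exact hab (ha'.trans hb'.symm)
        · exact key b hb' (ha' ▸ hr)
        · exact key a ha' (hb' ▸ hsymm _ _ hr)
        · exact hC'ind a ha' b hb' hab hr
      · have hcard : (insert u C').card = C'.card + 1 := by
          rw [Finset.card_insert_of_notMem]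
          intro h
          have := hC'sub h
          exact (Finset.mem_sdiff.1 this).2 huN
        rw [hcard]
        have hsplit : ∑ v ∈ Ω \ N, (1:ℝ) / ((Ω.filter (r v)).card) + ∑ v ∈ N, (1:ℝ) / ((Ω.filter (r v)).card) = ∑ v ∈ Ω, (1:ℝ) / ((Ω.filter (r v)).card) :=
          Finset.sum_sdiff hNsub
        have h1 : ∑ v ∈ N, (1:ℝ) / ((Ω.filter (r v)).card) ≤ 1 := by
          have hNcard : (0:ℝ) < (N.card : ℝ) := by
            exact_mod_cast Finset.card_pos.2 ⟨u, huN⟩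
          calc ∑ v ∈ N, (1:ℝ) / ((Ω.filter (r v)).card)
              ≤ ∑ v ∈ N, (1:ℝ) / (N.card : ℝ) := by
                apply Finset.sum_le_sum
                intro v hv
                apply one_div_le_one_div_of_le hNcard
                exact hmin v (hNsub hv)
            _ = 1 := by
                rw [Finset.sum_const, nsmul_eq_mul]
                field_simp
        have h2 : ∑ v ∈ Ω \ N, (1:ℝ) / ((Ω.filter (r v)).card) ≤ ∑ v ∈ Ω \ N, (1:ℝ) / (((Ω \ N).filter (r v)).card) := by
          apply Finset.sum_le_sum
          intro v hv
          apply one_div_le_one_div_of_le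
          · have : v ∈ (Ω \ N).filter (r v) := Finset.mem_filter.2 ⟨hv, hrefl v⟩
            exact_mod_cast Finset.card_pos.2 ⟨v, this⟩
          · exact_mod_cast Finset.card_le_card (Finset.filter_subset_filter _ Finset.sdiff_subset)
        push_cast
        linarith

theorem cs_step {α : Type*} (s : Finset α) (t : α → ℝ) (ht : ∀ a ∈ s, 0 < t a) :
    ((s.card : ℝ)) ^ 2 ≤ (∑ a ∈ s, t a) * (∑ a ∈ s, 1 / t a) := by
  have h := Finset.sum_mul_sq_le_sq_mul_sq s (fun a => Real.sqrt (t a)) (fun a => Real.sqrt (1 / t a))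
  have h1 : ∑ a ∈ s, Real.sqrt (t a) * Real.sqrt (1 / t a) = (s.card : ℝ) := by
    have : ∀ a ∈ s, Real.sqrt (t a) * Real.sqrt (1 / t a) = 1 := by
      intro a ha
      rw [← Real.sqrt_mul (le_of_lt (ht a ha)), mul_one_div_cancel (ne_of_gt (ht a ha))]
      exact Real.sqrt_one
    rw [Finset.sum_congr rfl this, Finset.sum_const, nsmul_eq_mul, mul_one]
  have h2 : ∑ a ∈ s, Real.sqrt (t a) ^ 2 = ∑ a ∈ s, t a :=
    Finset.sum_congr rfl fun a ha => Real.sq_sqrt (le_of_lt (ht a ha))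
  have h3 : ∑ a ∈ s, Real.sqrt (1 / t a) ^ 2 = ∑ a ∈ s, 1 / t a :=
    Finset.sum_congr rfl fun a ha => Real.sq_sqrt (by have := ht a ha; positivity)
  calc ((s.card : ℝ)) ^ 2 = (∑ a ∈ s, Real.sqrt (t a) * Real.sqrt (1 / t a)) ^ 2 := by rw [h1]
    _ ≤ (∑ a ∈ s, Real.sqrt (t a) ^ 2) * (∑ a ∈ s, Real.sqrt (1 / t a) ^ 2) := h
    _ = (∑ a ∈ s, t a) * (∑ a ∈ s, 1 / t a) := by rw [h2, h3]

theorem edge_sum (y : ℝ) (c : ℕ) :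
    ∑ b ∈ Finset.Icc (0:ℤ) ((c:ℤ)-1), y ^ ((c:ℤ) - b).natAbs = ∑ j ∈ Finset.Icc 1 c, y ^ j := by
  apply Finset.sum_bij' (fun b _ => ((c:ℤ) - b).toNat) (fun j _ => (c:ℤ) - (j:ℤ))
  · intro b hb; simp only [Finset.mem_Icc] at *; omega
  · intro j hj; simp only [Finset.mem_Icc] at *; omega
  · intro b hb; simp only [Finset.mem_Icc] at hb; omega
  · intro j hj; simp only [Finset.mem_Icc] at hj; omega
  · intro b hb; simp only [Finset.mem_Icc] at hb; congr 1; omega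

theorem Sval (y : ℝ) (q : ℕ) :
    ∑ a ∈ Finset.Icc (0:ℤ) ((q:ℤ)-1), ∑ b ∈ Finset.Icc (0:ℤ) ((q:ℤ)-1), y ^ (a-b).natAbs
      = (q:ℝ) + 2 * ∑ j ∈ Finset.Icc 1 (q-1), ((q-j:ℕ):ℝ) * y^j := by
  induction q with
  | zero => simp
  | succ q ihq =>
    have hI : Finset.Icc (0:ℤ) (((q+1:ℕ):ℤ) - 1) = insert (q:ℤ) (Finset.Icc (0:ℤ) ((q:ℤ)-1)) := by
      ext x
      simp only [Finset.mem_Icc, Finset.mem_insert]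
      push_cast
      omega
    have hnm : (q:ℤ) ∉ Finset.Icc (0:ℤ) ((q:ℤ)-1) := by
      simp only [Finset.mem_Icc]; omega
    rw [hI, Finset.sum_insert hnm]
    have hE' : ∀ a : ℤ, y ^ (a - (q:ℤ)).natAbs = y ^ ((q:ℤ) - a).natAbs := by
      intro a; congr 1; omega
    have inner : ∀ a ∈ Finset.Icc (0:ℤ) ((q:ℤ)-1),
        ∑ b ∈ insert (q:ℤ) (Finset.Icc (0:ℤ) ((q:ℤ)-1)), y ^ (a-b).natAbs
          = y ^ ((q:ℤ) - a).natAbs + ∑ b ∈ Finset.Icc (0:ℤ) ((q:ℤ)-1), y ^ (a-b).natAbs := by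
      intro a _
      rw [Finset.sum_insert hnm, hE' a]
    rw [Finset.sum_insert hnm, Finset.sum_congr rfl inner, Finset.sum_add_distrib, ihq,
      edge_sum]
    have hzero : ((q:ℤ) - (q:ℤ)).natAbs = 0 := by omega
    rw [hzero, pow_zero]
    -- combinatorial identity on the coefficient sums
    have hext : ∑ j ∈ Finset.Icc 1 (q-1), ((q-j:ℕ):ℝ) * y^j
        = ∑ j ∈ Finset.Icc 1 q, ((q-j:ℕ):ℝ) * y^j := by
      rcases Nat.eq_zero_or_pos q with rfl | hq
      · rfl
      · have : Finset.Icc 1 q = insert q (Finset.Icc 1 (q-1)) := by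
          ext x; simp only [Finset.mem_Icc, Finset.mem_insert]; omega
        rw [this, Finset.sum_insert (by simp only [Finset.mem_Icc]; omega)]
        simp
    have hcomb : ∑ j ∈ Finset.Icc 1 (q+1-1), ((q+1-j:ℕ):ℝ) * y^j
        = ∑ j ∈ Finset.Icc 1 q, y^j + ∑ j ∈ Finset.Icc 1 q, ((q-j:ℕ):ℝ) * y^j := by
      have h1 : (q+1-1) = q := by omega
      rw [h1, ← Finset.sum_add_distrib]
      apply Finset.sum_congr rfl
      intro j hj
      simp only [Finset.mem_Icc] at hj
      have : (q+1-j:ℕ) = (q-j:ℕ) + 1 := by omega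
      rw [this]
      push_cast
      ring
    rw [hcomb, hext]
    push_cast
    ring
theorem gv_bound (q n d : ℕ) (hq : 1 ≤ q) (hd : 1 ≤ d) (y : ℝ) (hy0 : 0 < y) (hy1 : y ≤ 1) :
    (q:ℝ)^(2*n) * y^(d-1) ≤ (hypercubeCodeMax q n d : ℝ) *
      (∑ a ∈ Finset.Icc (0:ℤ) ((q:ℤ)-1), ∑ b ∈ Finset.Icc (0:ℤ) ((q:ℤ)-1), y ^ (a-b).natAbs)^n := by
  classical
  set Ω : Finset (Fin n → ℤ) := Fintype.piFinset (fun _ : Fin n => Finset.Icc (0:ℤ) ((q:ℤ)-1)) with hΩ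
  set r : (Fin n → ℤ) → (Fin n → ℤ) → Prop := fun u v => (∑ i, |u i - v i|) ≤ (d:ℤ) - 1 with hr
  have hrefl : ∀ u, r u u := by
    intro u
    simp only [hr, sub_self, abs_zero, Finset.sum_const_zero]
    omega
  have hsymm : ∀ u v, r u v → r v u := by
    intro u v h
    simpa only [hr, abs_sub_comm] using h
  obtain ⟨C, hCsub, hCind, hCcard⟩ := caroWei r hrefl hsymm Ω
  set t : (Fin n → ℤ) → ℕ := fun u => (Ω.filter (r u)).card with ht
  have htpos : ∀ u ∈ Ω, 0 < ((t u : ℕ) : ℝ) := by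
    intro u hu
    have : u ∈ Ω.filter (r u) := Finset.mem_filter.2 ⟨hu, hrefl u⟩
    exact_mod_cast Finset.card_pos.2 ⟨u, this⟩
  -- the distance as a natural number
  set Dn : (Fin n → ℤ) → (Fin n → ℤ) → ℕ := fun u v => ∑ i, (u i - v i).natAbs with hDn
  -- product formula
  have hprod : ∑ u ∈ Ω, ∑ v ∈ Ω, y ^ (Dn u v)
      = (∑ a ∈ Finset.Icc (0:ℤ) ((q:ℤ)-1), ∑ b ∈ Finset.Icc (0:ℤ) ((q:ℤ)-1), y ^ (a-b).natAbs)^n := by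
    have h1 : ∀ u v : Fin n → ℤ, y ^ (Dn u v) = ∏ i, y ^ ((u i - v i).natAbs) := by
      intro u v
      rw [hDn, ← Finset.prod_pow_eq_pow_sum]
    calc ∑ u ∈ Ω, ∑ v ∈ Ω, y ^ (Dn u v)
        = ∑ u ∈ Ω, ∑ v ∈ Ω, ∏ i, y ^ ((u i - v i).natAbs) := by
          exact Finset.sum_congr rfl fun u _ => Finset.sum_congr rfl fun v _ => h1 u v
      _ = ∑ u ∈ Ω, ∏ i, ∑ b ∈ Finset.Icc (0:ℤ) ((q:ℤ)-1), y ^ ((u i - b).natAbs) := by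
          exact Finset.sum_congr rfl fun u _ => (Finset.prod_univ_sum (fun _ => Finset.Icc (0:ℤ) ((q:ℤ)-1)) (fun i b => y ^ ((u i - b).natAbs))).symm
      _ = ∏ i : Fin n, ∑ a ∈ Finset.Icc (0:ℤ) ((q:ℤ)-1), ∑ b ∈ Finset.Icc (0:ℤ) ((q:ℤ)-1), y ^ ((a - b).natAbs) := by
          exact (Finset.prod_univ_sum (fun _ => Finset.Icc (0:ℤ) ((q:ℤ)-1)) (fun i a => ∑ b ∈ Finset.Icc (0:ℤ) ((q:ℤ)-1), y ^ ((a - b).natAbs))).symm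
      _ = _ := by rw [Finset.prod_const, Finset.card_univ, Fintype.card_fin]
  -- ball bound
  have hball : (∑ u ∈ Ω, (t u : ℝ)) * y ^ (d-1) ≤ ∑ u ∈ Ω, ∑ v ∈ Ω, y ^ (Dn u v) := by
    rw [Finset.sum_mul]
    apply Finset.sum_le_sum
    intro u hu
    have : (t u : ℝ) * y ^ (d-1) = ∑ v ∈ Ω.filter (r u), y ^ (d-1) := by
      rw [Finset.sum_const, nsmul_eq_mul]
    rw [this]
    apply le_trans (Finset.sum_le_sum ?_) (Finset.sum_le_sum_of_subset_of_nonneg (Finset.filter_subset _ _) ?_)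
    · intro v hv
      have hrv : r u v := (Finset.mem_filter.1 hv).2
      have hDle : Dn u v ≤ d - 1 := by
        have hcast : ((Dn u v : ℕ) : ℤ) = ∑ i, |u i - v i| := by
          rw [hDn]
          push_cast [Int.natCast_natAbs]
          rfl
        rw [hr] at hrv
        omega
      exact pow_le_pow_of_le_one hy0.le hy1 hDle
    · intro v _ _
      positivity
  -- cardinality of Ω
  have hΩcard : (Ω.card : ℝ) = (q:ℝ)^n := by
    rw [hΩ, Fintype.card_piFinset]
    simp only [Int.card_Icc]
    rw [Finset.prod_const, Finset.card_univ, Fintype.card_fin]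
    have : ((q:ℤ) - 1 + 1 - 0).toNat = q := by omega
    rw [this]
    push_cast
    ring
  -- membership of the code size in the defining set
  have hmem : C.card ∈ {m : ℕ | ∃ C : Finset (Fin n → ℤ),
      (∀ u ∈ C, ∀ i, 0 ≤ u i ∧ u i ≤ (q : ℤ) - 1) ∧
      (∀ u ∈ C, ∀ v ∈ C, u ≠ v → (d : ℤ) ≤ ∑ i, |u i - v i|) ∧
      C.card = m} := by
    refine ⟨C, ?_, ?_, rfl⟩
    · intro u hu i
      have := Fintype.mem_piFinset.1 (hCsub hu) i
      simpa using Finset.mem_Icc.1 this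
    · intro u hu v hv huv
      have hnr := hCind u hu v hv huv
      rw [hr] at hnr
      push_neg at hnr
      omega
  have hbdd : BddAbove {m : ℕ | ∃ C : Finset (Fin n → ℤ),
      (∀ u ∈ C, ∀ i, 0 ≤ u i ∧ u i ≤ (q : ℤ) - 1) ∧
      (∀ u ∈ C, ∀ v ∈ C, u ≠ v → (d : ℤ) ≤ ∑ i, |u i - v i|) ∧
      C.card = m} := by
    refine ⟨Ω.card, ?_⟩
    rintro m ⟨C', hC'1, _, rfl⟩
    apply Finset.card_le_card
    intro u hu
    rw [hΩ, Fintype.mem_piFinset]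
    intro i
    rw [Finset.mem_Icc]
    exact hC'1 u hu i
  have hA : (C.card : ℝ) ≤ (hypercubeCodeMax q n d : ℝ) := by
    have h : C.card ≤ hypercubeCodeMax q n d := by
      rw [hypercubeCodeMax]
      exact le_csSup hbdd hmem
    exact_mod_cast h
  -- assemble
  set S : ℝ := ∑ a ∈ Finset.Icc (0:ℤ) ((q:ℤ)-1), ∑ b ∈ Finset.Icc (0:ℤ) ((q:ℤ)-1), y ^ (a-b).natAbs with hS
  have hSn_nonneg : (0:ℝ) ≤ S^n := by
    have : (0:ℝ) ≤ S := by
      rw [hS]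
      apply Finset.sum_nonneg
      intro a _
      apply Finset.sum_nonneg
      intro b _
      positivity
    positivity
  have hT_nonneg : (0:ℝ) ≤ ∑ u ∈ Ω, (t u : ℝ) := by
    apply Finset.sum_nonneg; intro u _; positivity
  have cs := cs_step Ω (fun u => (t u : ℝ)) htpos
  have step1 : ((Ω.card : ℝ))^2 ≤ (∑ u ∈ Ω, (t u : ℝ)) * (C.card : ℝ) := by
    calc ((Ω.card : ℝ))^2 ≤ (∑ u ∈ Ω, (t u : ℝ)) * (∑ u ∈ Ω, 1 / (t u : ℝ)) := cs
      _ ≤ (∑ u ∈ Ω, (t u : ℝ)) * (C.card : ℝ) :=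
          mul_le_mul_of_nonneg_left hCcard hT_nonneg
  have step2 : (∑ u ∈ Ω, (t u : ℝ)) * y ^ (d-1) ≤ S^n := by
    rw [hS]
    exact le_trans hball (le_of_eq hprod)
  have hCnonneg : (0:ℝ) ≤ (C.card : ℝ) := Nat.cast_nonneg _
  have hy_pow_nonneg : (0:ℝ) ≤ y ^ (d-1) := by positivity
  calc (q:ℝ)^(2*n) * y^(d-1) = ((Ω.card:ℝ))^2 * y^(d-1) := by
        rw [hΩcard, ← pow_mul]
        ring_nf
    _ ≤ ((∑ u ∈ Ω, (t u : ℝ)) * (C.card : ℝ)) * y^(d-1) :=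
        mul_le_mul_of_nonneg_right step1 hy_pow_nonneg
    _ = ((∑ u ∈ Ω, (t u : ℝ)) * y^(d-1)) * (C.card : ℝ) := by ring
    _ ≤ S^n * (C.card : ℝ) := mul_le_mul_of_nonneg_right step2 hCnonneg
    _ ≤ S^n * (hypercubeCodeMax q n d : ℝ) := mul_le_mul_of_nonneg_left hA hSn_nonneg
    _ = (hypercubeCodeMax q n d : ℝ) * S^n := by ring


theorem codeMax_le_pow (q n d : ℕ) : hypercubeCodeMax q n d ≤ q ^ n := by
  classical
  rw [hypercubeCodeMax]
  have hne : Set.Nonempty {m : ℕ | ∃ C : Finset (Fin n → ℤ),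
      (∀ u ∈ C, ∀ i, 0 ≤ u i ∧ u i ≤ (q : ℤ) - 1) ∧
      (∀ u ∈ C, ∀ v ∈ C, u ≠ v → (d : ℤ) ≤ ∑ i, |u i - v i|) ∧
      C.card = m} := ⟨0, ∅, by simp, by simp, by simp⟩
  apply csSup_le hne
  rintro m ⟨C, h1, _, rfl⟩
  have hsub : C ⊆ Fintype.piFinset (fun _ : Fin n => Finset.Icc (0:ℤ) ((q:ℤ)-1)) := by
    intro u hu
    rw [Fintype.mem_piFinset]
    intro i
    rw [Finset.mem_Icc]
    exact h1 u hu i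
  calc C.card ≤ (Fintype.piFinset (fun _ : Fin n => Finset.Icc (0:ℤ) ((q:ℤ)-1))).card :=
        Finset.card_le_card hsub
    _ = q ^ n := by
        rw [Fintype.card_piFinset]
        simp only [Int.card_Icc]
        rw [Finset.prod_const, Finset.card_univ, Fintype.card_fin]
        congr 1
        omega

end auxGV

/-- The Gilbert–Varshamov lower bound for codes in the hypercube `ℤ_q^n` under the
L1 metric: if `0 < δ ≤ (q²−1)/(3q)`, `0 < y* ≤ 1` satisfies the critical equation
`2·Σ_{j=1}^{q−1}(q−j)(j−δ)(y*)^j = qδ`, and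
`x* = 1/(q + 2·Σ_{j=1}^{q−1}(q−j)(y*)^j)`, then the asymptotic rate is at least
`2·log₂ q + log₂ x* + δ·log₂ y*`. -/
theorem stmt18 (q : ℕ) (hq : 2 ≤ q) (δ : ℝ) (hδ0 : 0 < δ)
    (hδ : δ ≤ ((q : ℝ) ^ 2 - 1) / (3 * q))
    (ystar : ℝ) (hy0 : 0 < ystar) (hy1 : ystar ≤ 1)
    (hcrit : 2 * ∑ j ∈ Finset.Icc 1 (q - 1),
        ((q - j : ℕ) : ℝ) * ((j : ℝ) - δ) * ystar ^ j = q * δ) :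
    let xstar : ℝ :=
      1 / ((q : ℝ) + 2 * ∑ j ∈ Finset.Icc 1 (q - 1), ((q - j : ℕ) : ℝ) * ystar ^ j)
    2 * Real.logb 2 q + Real.logb 2 xstar + δ * Real.logb 2 ystar
      ≤ Filter.limsup
          (fun n : ℕ =>
            Real.logb 2 (hypercubeCodeMax q n ⌊δ * (n : ℝ)⌋₊) / n)
          Filter.atTop := by
  intro xstar
  set S0 : ℝ := (q : ℝ) + 2 * ∑ j ∈ Finset.Icc 1 (q - 1), ((q - j : ℕ) : ℝ) * ystar ^ j with hS0def
  have hqpos : (0:ℝ) < q := by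
    have : 0 < q := by omega
    exact_mod_cast this
  have hsum_nonneg : 0 ≤ ∑ j ∈ Finset.Icc 1 (q - 1), ((q - j : ℕ) : ℝ) * ystar ^ j := by
    apply Finset.sum_nonneg
    intro j _
    positivity
  have hS0pos : 0 < S0 := by rw [hS0def]; linarith
  have hxval : xstar = 1 / S0 := rfl
  have hxs : Real.logb 2 xstar = - Real.logb 2 S0 := by
    rw [hxval, one_div, Real.logb_inv]
  have hlogy : Real.logb 2 ystar ≤ 0 := Real.logb_nonpos one_lt_two hy0.le hy1
  -- the key per-n estimate
  have key : ∀ n : ℕ, 1 ≤ n → (1:ℝ) ≤ δ * n →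
      2 * Real.logb 2 q + Real.logb 2 xstar + δ * Real.logb 2 ystar
        ≤ Real.logb 2 (hypercubeCodeMax q n ⌊δ * (n : ℝ)⌋₊) / n := by
    intro n hn hδn
    set d := ⌊δ * (n : ℝ)⌋₊ with hddef
    set A := hypercubeCodeMax q n d with hAdef
    have hnpos : (0:ℝ) < n := by exact_mod_cast hn
    have hd1 : 1 ≤ d := Nat.le_floor (by exact_mod_cast hδn)
    have hgv := gv_bound q n d (by omega) hd1 ystar hy0 hy1
    rw [Sval ystar q] at hgv
    -- hgv : (q:ℝ)^(2*n) * ystar^(d-1) ≤ A * S0^n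
    have hBpos : (0:ℝ) < (q:ℝ)^(2*n) * ystar^(d-1) / S0^n := by positivity
    have hB : (q:ℝ)^(2*n) * ystar^(d-1) / S0^n ≤ (A:ℝ) := by
      rw [div_le_iff₀ (by positivity)]
      exact hgv
    have hlogB : Real.logb 2 ((q:ℝ)^(2*n) * ystar^(d-1) / S0^n) ≤ Real.logb 2 (A:ℝ) :=
      Real.logb_le_logb_of_le one_lt_two hBpos hB
    have hexp : Real.logb 2 ((q:ℝ)^(2*n) * ystar^(d-1) / S0^n)
        = (2*n) * Real.logb 2 q + ((d-1:ℕ):ℝ) * Real.logb 2 ystar - n * Real.logb 2 S0 := by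
      rw [Real.logb_div (by positivity) (by positivity),
        Real.logb_mul (by positivity) (by positivity),
        Real.logb_pow, Real.logb_pow, Real.logb_pow]
      push_cast
      ring
    have hdle : ((d-1:ℕ):ℝ) ≤ δ * n := by
      have h1 : (d:ℝ) ≤ δ * n := Nat.floor_le (by positivity)
      have h2 : ((d-1:ℕ):ℝ) = (d:ℝ) - 1 := by
        rw [Nat.cast_sub hd1]; norm_num
      linarith
    have h5 : (δ * n) * Real.logb 2 ystar ≤ ((d-1:ℕ):ℝ) * Real.logb 2 ystar :=
      mul_le_mul_of_nonpos_right hdle hlogy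
    rw [le_div_iff₀ hnpos]
    calc (2 * Real.logb 2 q + Real.logb 2 xstar + δ * Real.logb 2 ystar) * n
        = (2*n) * Real.logb 2 q + (δ * n) * Real.logb 2 ystar - n * Real.logb 2 S0 := by
          rw [hxs]; ring
      _ ≤ (2*n) * Real.logb 2 q + ((d-1:ℕ):ℝ) * Real.logb 2 ystar - n * Real.logb 2 S0 := by
          linarith
      _ = Real.logb 2 ((q:ℝ)^(2*n) * ystar^(d-1) / S0^n) := hexp.symm
      _ ≤ Real.logb 2 (A:ℝ) := hlogB
  -- eventual lower bound
  have hev : ∀ᶠ n in Filter.atTop,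
      2 * Real.logb 2 q + Real.logb 2 xstar + δ * Real.logb 2 ystar
        ≤ Real.logb 2 (hypercubeCodeMax q n ⌊δ * (n : ℝ)⌋₊) / n := by
    filter_upwards [Filter.eventually_ge_atTop (⌈δ⁻¹⌉₊ + 1)] with n hn
    have hn1 : 1 ≤ n := by omega
    have hδn : (1:ℝ) ≤ δ * n := by
      have h1 : δ⁻¹ ≤ (n:ℝ) := by
        calc δ⁻¹ ≤ (⌈δ⁻¹⌉₊ : ℝ) := Nat.le_ceil _
          _ ≤ (n:ℝ) := by exact_mod_cast Nat.le_of_succ_le hn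
      calc (1:ℝ) = δ * δ⁻¹ := by field_simp
        _ ≤ δ * n := by
          apply mul_le_mul_of_nonneg_left h1 hδ0.le
    exact key n hn1 hδn
  -- bounded above
  have hbd : Filter.IsBoundedUnder (· ≤ ·) Filter.atTop
      (fun n : ℕ => Real.logb 2 (hypercubeCodeMax q n ⌊δ * (n : ℝ)⌋₊) / n) := by
    refine ⟨Real.logb 2 q, Filter.eventually_map.2 ?_⟩
    filter_upwards [Filter.eventually_ge_atTop 1] with n hn
    set A := hypercubeCodeMax q n ⌊δ * (n : ℝ)⌋₊ with hAdef
    have hnpos : (0:ℝ) < n := by exact_mod_cast hn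
    have hlogq : 0 ≤ Real.logb 2 q :=
      Real.logb_nonneg one_lt_two (by exact_mod_cast Nat.one_le_of_lt hq)
    rcases Nat.eq_zero_or_pos A with hA0 | hApos
    · rw [hA0]
      simp only [Nat.cast_zero, Real.logb_zero, zero_div]
      exact hlogq
    · have hA1 : (1:ℝ) ≤ (A:ℝ) := by exact_mod_cast hApos
      have hAle : (A:ℝ) ≤ (q:ℝ)^n := by
        have := codeMax_le_pow q n ⌊δ * (n : ℝ)⌋₊
        calc (A:ℝ) ≤ ((q^n : ℕ):ℝ) := by exact_mod_cast this
          _ = (q:ℝ)^n := by push_cast; ring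
      have : Real.logb 2 (A:ℝ) ≤ Real.logb 2 ((q:ℝ)^n) :=
        Real.logb_le_logb_of_le one_lt_two (by linarith) hAle
      rw [Real.logb_pow] at this
      rw [div_le_iff₀ hnpos]
      calc Real.logb 2 (A:ℝ) ≤ (n:ℝ) * Real.logb 2 q := this
        _ = Real.logb 2 q * n := by ring
  exact Filter.le_limsup_of_frequently_le hev.frequently hbd
end

section
/- Fix a real 0 < δ ≤ 1. Let A(ℤ_4^n, d) be the maximum cardinality of a subset C ⊆ ℤ_4^n such that D(c₁,c₂) ≥ d for all distinct c₁, c₂ ∈ C. Then limsup_{n→∞} (1/n)·log₂ A(ℤ_4^n, ⌊δn⌋) ≥ (2−δ)·log₂(2−δ) + δ·log₂ δ. -/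
open Finset

section GilbertVarshamov

variable {α β : Type*} [DecidableEq α] [LinearOrder β]

/-- Gilbert–Varshamov: the balls around a code of maximal size cover `S`. -/
theorem exists_code_card_le_card_mul (S : Finset α) (dist : α → α → β) (d : β)
    (dist_self_lt : ∀ u, dist u u < d) (dist_comm : ∀ u v, dist u v = dist v u) (V : ℕ)
    (card_ball_le : ∀ c ∈ S, #{u ∈ S | dist u c < d} ≤ V) :
    ∃ C ⊆ S, (∀ u ∈ C, ∀ v ∈ C, u ≠ v → d ≤ dist u v) ∧ #S ≤ #C * V := by
  obtain ⟨C, hC, hmax⟩ := exists_max_image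
    (S.powerset.filter fun C => ∀ u ∈ C, ∀ v ∈ C, u ≠ v → d ≤ dist u v) card ⟨∅, by simp⟩
  rw [mem_filter, mem_powerset] at hC
  obtain ⟨hCS, hCcode⟩ := hC
  have cover : ∀ w ∈ S, ∃ c ∈ C, dist w c < d := by
    intro w hw
    by_contra! far
    have hwC : w ∉ C := fun h => (far w h).not_gt (dist_self_lt w)
    have hins := hmax (insert w C) <| by
      refine mem_filter.2 ⟨mem_powerset.2 (insert_subset hw hCS), ?_⟩
      intro u hu v hv huv
      rw [mem_insert] at hu hv
      rcases hu with rfl | hu <;> rcases hv with rfl | hv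
      · exact absurd rfl huv
      · exact far v hv
      · exact dist_comm u v ▸ far u hu
      · exact hCcode u hu v hv huv
    rw [card_insert_of_notMem hwC] at hins
    omega
  refine ⟨C, hCS, hCcode, ?_⟩
  calc #S ≤ #(C.biUnion fun c => {u ∈ S | dist u c < d}) := card_le_card fun w hw => by
        obtain ⟨c, hc, hwc⟩ := cover w hw
        exact mem_biUnion.2 ⟨c, hc, mem_filter.2 ⟨hw, hwc⟩⟩
    _ ≤ ∑ c ∈ C, #{u ∈ S | dist u c < d} := card_biUnion_le
    _ ≤ ∑ _c ∈ C, V := sum_le_sum fun c hc => card_ball_le c (hCS hc)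
    _ = #C * V := by rw [sum_const, smul_eq_mul]

end GilbertVarshamov

section Hamming

variable {ι κ : Type*} [Fintype ι]

theorem hammingDist_prod_eq_sum {γ : Type*} [Fintype κ] [DecidableEq κ] [DecidableEq γ]
    (x y : ι × κ → γ) :
    hammingDist x y = ∑ i, hammingDist (fun k => x (i, k)) (fun k => y (i, k)) := by
  simp only [hammingDist, card_filter, Fintype.sum_prod_type]

theorem card_hammingDist_lt_le [DecidableEq ι] (c : ι → Bool) (d : ℕ) :
    #{x | hammingDist x c < d} ≤ ∑ j ∈ range d, (Fintype.card ι).choose j := by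
  calc #{x | hammingDist x c < d}
      ≤ #((range d).biUnion fun j => powersetCard j (univ : Finset ι)) := by
        refine card_le_card_of_injOn (fun x => ({i | x i ≠ c i} : Finset ι)) (fun x hx => ?_) ?_
        · exact mem_biUnion.2 ⟨_, mem_range.2 (mem_filter.1 (mem_coe.1 hx)).2,
            mem_powersetCard.2 ⟨subset_univ _, rfl⟩⟩
        · intro x _ y _ hxy
          funext i
          have hi := congrArg (i ∈ ·) hxy
          simp only [mem_filter, mem_univ, true_and, eq_iff_iff] at hi
          revert hi
          cases x i <;> cases y i <;> cases c i <;> decide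
    _ ≤ ∑ j ∈ range d, #(powersetCard j (univ : Finset ι)) := card_biUnion_le
    _ = ∑ j ∈ range d, (Fintype.card ι).choose j := by simp only [card_powersetCard, card_univ]

end Hamming

theorem sum_range_choose_mul_pow_le (N r : ℕ) {x : ℝ} (hx0 : 0 ≤ x) (hx1 : x ≤ 1) :
    (∑ j ∈ range (r + 1), (N.choose j : ℝ)) * x ^ r ≤ (1 + x) ^ N := by
  calc (∑ j ∈ range (r + 1), (N.choose j : ℝ)) * x ^ r
      ≤ ∑ j ∈ range (r + 1), (N.choose j : ℝ) * x ^ j := by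
        rw [sum_mul]
        exact sum_le_sum fun j hj =>
          mul_le_mul_of_nonneg_left (pow_le_pow_of_le_one hx0 hx1 (by simpa [Nat.lt_succ_iff]
            using hj)) (by positivity)
    _ ≤ ∑ j ∈ range (max r N + 1), (N.choose j : ℝ) * x ^ j :=
        sum_le_sum_of_subset_of_nonneg (range_subset_range.2 (by omega))
          fun j _ _ => by positivity
    _ = ∑ j ∈ range (N + 1), (N.choose j : ℝ) * x ^ j := by
        refine (sum_subset (range_subset_range.2 (by omega)) fun j _ hj => ?_).symm
        rw [Nat.choose_eq_zero_of_lt (by simpa using hj), Nat.cast_zero, zero_mul]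
    _ = (1 + x) ^ N := by
        rw [add_comm 1 x, add_pow]
        exact sum_congr rfl fun j _ => by rw [one_pow, mul_one, mul_comm]

section Hypercube

noncomputable def hypercube (q n : ℕ) : Finset (Fin n → ℤ) :=
  Fintype.piFinset fun _ => Icc 0 ((q : ℤ) - 1)

variable {q n : ℕ}

theorem mem_hypercube {u : Fin n → ℤ} : u ∈ hypercube q n ↔ ∀ i, 0 ≤ u i ∧ u i ≤ (q : ℤ) - 1 := by
  simp only [hypercube, Fintype.mem_piFinset, mem_Icc]

theorem card_hypercube : #(hypercube q n) = q ^ n := by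
  simp [hypercube, Fintype.card_piFinset]

theorem card_le_hypercubeCodeMax {d : ℕ} {C : Finset (Fin n → ℤ)} (hC : C ⊆ hypercube q n)
    (hCd : ∀ u ∈ C, ∀ v ∈ C, u ≠ v → (d : ℤ) ≤ ∑ i, |u i - v i|) :
    #C ≤ hypercubeCodeMax q n d := by
  refine le_csSup ⟨q ^ n, ?_⟩ ⟨C, fun u hu => mem_hypercube.1 (hC hu), hCd, rfl⟩
  rintro m ⟨C', hC', -, rfl⟩
  exact card_hypercube (q := q) ▸ card_le_card fun u hu => mem_hypercube.2 (hC' u hu)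

theorem hypercubeCodeMax_le_pow (d : ℕ) : hypercubeCodeMax q n d ≤ q ^ n := by
  refine csSup_le ⟨0, ∅, by simp⟩ ?_
  rintro m ⟨C, hC, -, rfl⟩
  exact card_hypercube (q := q) ▸ card_le_card fun u hu => mem_hypercube.2 (hC u hu)

theorem logb_hypercubeCodeMax_le (d : ℕ) :
    Real.logb 2 (hypercubeCodeMax q n d) ≤ n * Real.logb 2 q := by
  rcases (hypercubeCodeMax q n d).eq_zero_or_pos with h | h
  · rw [h, Nat.cast_zero, Real.logb_zero]
    exact mul_nonneg n.cast_nonneg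
      (div_nonneg (Real.log_natCast_nonneg q) (Real.log_nonneg one_le_two))
  · rw [← Real.logb_pow]
    exact Real.logb_le_logb_of_le one_lt_two (by exact_mod_cast h)
      (by exact_mod_cast hypercubeCodeMax_le_pow d)

end Hypercube

section GrayCode

/-- The Gray map `0, 1, 2, 3 ↦ 00, 01, 11, 10`. -/
def grayDigit (a : ℤ) : Bool → Bool := fun b => if b then decide (a = 1 ∨ a = 2) else decide (2 ≤ a)

theorem grayDigit_injOn : Set.InjOn grayDigit (Set.Icc 0 3) := by
  rintro a ⟨ha0, ha3⟩ b ⟨hb0, hb3⟩ hab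
  have h0 := congrFun hab false
  have h1 := congrFun hab true
  interval_cases a <;> interval_cases b <;> simp_all [grayDigit]

theorem hammingDist_grayDigit_le {a b : ℤ} (ha : a ∈ Set.Icc 0 3) (hb : b ∈ Set.Icc 0 3) :
    (hammingDist (grayDigit a) (grayDigit b) : ℤ) ≤ |a - b| := by
  obtain ⟨ha0, ha3⟩ := ha
  obtain ⟨hb0, hb3⟩ := hb
  interval_cases a <;> interval_cases b <;> decide

variable {n : ℕ}

theorem mem_Icc_of_mem_hypercube_four {u : Fin n → ℤ} (hu : u ∈ hypercube 4 n) (i : Fin n) :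
    u i ∈ Set.Icc 0 3 := by
  simpa using mem_hypercube.1 hu i

def grayCode (u : Fin n → ℤ) : Fin n × Bool → Bool := fun p => grayDigit (u p.1) p.2

theorem grayCode_injOn : Set.InjOn grayCode (hypercube 4 n : Set (Fin n → ℤ)) :=
  fun _ hu _ hv huv => funext fun i =>
    grayDigit_injOn (mem_Icc_of_mem_hypercube_four hu i) (mem_Icc_of_mem_hypercube_four hv i)
      (funext fun b => congrFun huv (i, b))

theorem hammingDist_grayCode_le {u v : Fin n → ℤ} (hu : u ∈ hypercube 4 n)
    (hv : v ∈ hypercube 4 n) : (hammingDist (grayCode u) (grayCode v) : ℤ) ≤ ∑ i, |u i - v i| := by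
  rw [hammingDist_prod_eq_sum, Nat.cast_sum]
  exact sum_le_sum fun i _ => hammingDist_grayDigit_le
    (mem_Icc_of_mem_hypercube_four hu i) (mem_Icc_of_mem_hypercube_four hv i)

theorem card_l1Ball_le {c : Fin n → ℤ} (hc : c ∈ hypercube 4 n) (d : ℕ) :
    #{u ∈ hypercube 4 n | ∑ i, |u i - c i| < d} ≤ ∑ j ∈ range d, (2 * n).choose j := by
  calc #{u ∈ hypercube 4 n | ∑ i, |u i - c i| < d}
      ≤ #{x | hammingDist x (grayCode c) < d} := by
        refine card_le_card_of_injOn grayCode (fun u hu => ?_)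
          (grayCode_injOn.mono fun u hu => (mem_filter.1 hu).1)
        obtain ⟨hu, hud⟩ := mem_filter.1 hu
        exact mem_filter.2
          ⟨mem_univ _, by exact_mod_cast (hammingDist_grayCode_le hu hc).trans_lt hud⟩
    _ ≤ ∑ j ∈ range d, (Fintype.card (Fin n × Bool)).choose j := card_hammingDist_lt_le _ d
    _ = ∑ j ∈ range d, (2 * n).choose j := by
        rw [Fintype.card_prod, Fintype.card_fin, Fintype.card_bool, mul_comm]

end GrayCode

theorem four_pow_mul_pow_le_hypercubeCodeMax_mul (n r : ℕ) {x : ℝ} (hx0 : 0 ≤ x) (hx1 : x ≤ 1) :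
    (4 : ℝ) ^ n * x ^ r ≤ hypercubeCodeMax 4 n (r + 1) * (1 + x) ^ (2 * n) := by
  obtain ⟨C, hCS, hCcode, hcard⟩ := exists_code_card_le_card_mul (hypercube 4 n)
    (fun u v => ∑ i, |u i - v i|) ((r + 1 : ℕ) : ℤ) (fun _ => by simp)
    (fun _ _ => by simp only [abs_sub_comm]) _ fun c hc => card_l1Ball_le hc (r + 1)
  have hC : (#C : ℝ) ≤ hypercubeCodeMax 4 n (r + 1) := by
    exact_mod_cast card_le_hypercubeCodeMax hCS hCcode
  rw [card_hypercube] at hcard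
  calc (4 : ℝ) ^ n * x ^ r
      ≤ #C * ((∑ j ∈ range (r + 1), ((2 * n).choose j : ℝ)) * x ^ r) := by
        rw [← mul_assoc]
        gcongr
        exact_mod_cast hcard
    _ ≤ hypercubeCodeMax 4 n (r + 1) * (1 + x) ^ (2 * n) := by
        gcongr
        exact sum_range_choose_mul_pow_le _ r hx0 hx1

theorem rate_le_logb_hypercubeCodeMax_div {δ : ℝ} (hδ0 : 0 < δ) (hδ1 : δ ≤ 1) {n : ℕ}
    (hn : 1 ≤ δ * n) :
    (2 - δ) * Real.logb 2 (2 - δ) + δ * Real.logb 2 δ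
      ≤ Real.logb 2 (hypercubeCodeMax 4 n ⌊δ * n⌋₊) / n := by
  obtain ⟨r, hr⟩ := Nat.exists_eq_add_of_le' (Nat.one_le_floor_iff _ |>.2 hn)
  have hrδ : (r : ℝ) ≤ δ * n := by
    have := Nat.floor_le (zero_le_one.trans hn)
    rw [hr, Nat.cast_add_one] at this
    linarith
  have hn0 : (0 : ℝ) < n := one_pos.trans_le (hn.trans (mul_le_of_le_one_left n.cast_nonneg hδ1))
  have h2δ : 0 < 2 - δ := by linarith
  set x := δ / (2 - δ) with hx
  have hx0 : 0 < x := div_pos hδ0 h2δ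
  have hx1 : x ≤ 1 := (div_le_one h2δ).2 (by linarith)
  have hbound := four_pow_mul_pow_le_hypercubeCodeMax_mul n r hx0.le hx1
  rw [← hr] at hbound
  set M := (hypercubeCodeMax 4 n ⌊δ * n⌋₊ : ℝ)
  have hM : 0 < M :=
    (mul_pos_iff_of_pos_right (by positivity)).1 (lt_of_lt_of_le (by positivity) hbound)
  have hlog := Real.logb_le_logb_of_le one_lt_two (by positivity) hbound
  rw [Real.logb_mul (by positivity) (by positivity), Real.logb_mul hM.ne' (by positivity),
    Real.logb_pow, Real.logb_pow, Real.logb_pow] at hlog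
  have hlog4 : Real.logb 2 4 = 2 := by
    rw [show (4 : ℝ) = 2 ^ 2 by norm_num, Real.logb_pow, Real.logb_self_eq_one one_lt_two]
    norm_num
  have hlogx : Real.logb 2 x = Real.logb 2 δ - Real.logb 2 (2 - δ) :=
    Real.logb_div hδ0.ne' h2δ.ne'
  have hlog1x : Real.logb 2 (1 + x) = 1 - Real.logb 2 (2 - δ) := by
    rw [show 1 + x = 2 / (2 - δ) by rw [hx]; field_simp; ring, Real.logb_div two_ne_zero h2δ.ne',
      Real.logb_self_eq_one one_lt_two]
  have hrx : δ * n * Real.logb 2 x ≤ r * Real.logb 2 x :=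
    mul_le_mul_of_nonpos_right hrδ (Real.logb_nonpos one_lt_two hx0.le hx1)
  rw [hlog4, hlog1x, hlogx] at hlog
  rw [hlogx] at hrx
  push_cast at hlog
  rw [le_div_iff₀ hn0]
  linarith

/-- The Lee-metric Gilbert–Varshamov lower bound for L1-metric codes in the quaternary
hypercube `ℤ_4^n`: for `0 < δ ≤ 1`, the asymptotic rate is at least
`(2−δ)·log₂(2−δ) + δ·log₂ δ`. -/
theorem stmt19 (δ : ℝ) (hδ0 : 0 < δ) (hδ1 : δ ≤ 1) :
    (2 - δ) * Real.logb 2 (2 - δ) + δ * Real.logb 2 δ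
      ≤ Filter.limsup
          (fun n : ℕ =>
            Real.logb 2 (hypercubeCodeMax 4 n ⌊δ * (n : ℝ)⌋₊) / n)
          Filter.atTop := by
  have hbdd : Filter.IsBoundedUnder (· ≤ ·) Filter.atTop
      (fun n : ℕ => Real.logb 2 (hypercubeCodeMax 4 n ⌊δ * (n : ℝ)⌋₊) / n) :=
    Filter.isBoundedUnder_of ⟨Real.logb 2 4, fun n =>
      div_le_of_le_mul₀ n.cast_nonneg (Real.logb_nonneg one_lt_two (by norm_num))
        (by simpa [mul_comm] using logb_hypercubeCodeMax_le (q := 4) (n := n) _)⟩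
  have hlarge : ∀ᶠ n : ℕ in Filter.atTop, 1 ≤ δ * n :=
    (tendsto_natCast_atTop_atTop.const_mul_atTop hδ0).eventually_ge_atTop 1
  exact Filter.le_limsup_of_frequently_le
    (hlarge.mono fun n hn => rate_le_logb_hypercubeCodeMax_div hδ0 hδ1 hn).frequently hbdd
end
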